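/- arXiv:2206.06001 — 11 statements merged into one kernel-verified Lean document; each statement's English description precedes it below -/
import Mathlib

section
/- Let N ≥ 1 and let â ∈ ℂ^N satisfy ‖â‖² = N, and let ε, η₁, η₂ be reals with 0 < ε < N, η₁ > 0, η₂ > 0. Define the (N+1)×(N+1) Hermitian matrices A₁ = [[I_N, −â],[−â^H, ‖â‖² − ε]], A₂ = [[I_N, 0],[0, 0]], A₃ = [[0, 0],[0, 1]] (written in 2×2 block form with top-left block of size N×N). Then there exists a Hermitian positive definite (N+1)×(N+1) matrix X such that tr(A₁X) < 0, N − η₁ < tr(A₂X) < N + η₂, and tr(A₃X) = 1; i.e., the primal semidefinite program is strictly feasible. -/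
open Matrix
open scoped ComplexOrder

/-- Squared Euclidean norm of a complex vector. -/
noncomputable def nsq {N : ℕ} (a : Fin N → ℂ) : ℝ := ∑ i, Complex.normSq (a i)

/-- The `(N+1) × (N+1)` Hermitian block matrix `[[A, b], [bᴴ, c]]`. -/
noncomputable def blk {N : ℕ} (A : Matrix (Fin N) (Fin N) ℂ) (b : Fin N → ℂ) (c : ℝ) :
    Matrix (Fin N ⊕ Fin 1) (Fin N ⊕ Fin 1) ℂ :=
  Matrix.fromBlocks A (Matrix.of fun i _ => b i) (Matrix.of fun _ j => star (b j))
    (Matrix.of fun _ _ => (c : ℂ))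

/-!
Take `X = (1 - δ) v vᴴ + δ I` with `v = (â, 1)`. The rank-one part has `vᴴ A₁ v = -ε`,
`vᴴ A₂ v = N`, `vᴴ A₃ v = 1`, and the term `δ I` makes `X` definite while moving each
`tr (Aᵢ X)` by `δ (tr Aᵢ - vᴴ Aᵢ v)`, which vanishes for `A₂` and `A₃`. With `δ = ε / (4N)` we get
`tr (A₁ X) = 2Nδ - ε = -ε/2`.
-/

lemma trace_mul_smul_vecMulVec_add_smul_one {n R : Type*} [Fintype n] [DecidableEq n] [CommRing R]
    [StarRing R] (M : Matrix n n R) (v : n → R) (s t : R) :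
    trace (M * (s • vecMulVec v (star v) + t • 1)) = s * (star v ⬝ᵥ (M *ᵥ v)) + t * trace M := by
  rw [Matrix.mul_add, trace_add, Matrix.mul_smul, Matrix.mul_smul, trace_smul, trace_smul,
    mul_vecMulVec, trace_vecMulVec, dotProduct_comm, Matrix.mul_one, smul_eq_mul, smul_eq_mul]

lemma star_dotProduct_self_eq_nsq {N : ℕ} (a : Fin N → ℂ) : star a ⬝ᵥ a = nsq a := by
  simp [dotProduct, nsq, Complex.normSq_eq_conj_mul_self]

lemma trace_blk {N : ℕ} (A : Matrix (Fin N) (Fin N) ℂ) (b : Fin N → ℂ) (c : ℝ) :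
    trace (blk A b c) = trace A + c := by
  simp [blk, trace, Fintype.sum_sum_type]

lemma star_dotProduct_blk_mulVec {N : ℕ} (A : Matrix (Fin N) (Fin N) ℂ) (b x : Fin N → ℂ) (c : ℝ) :
    star (Sum.elim x 1) ⬝ᵥ (blk A b c *ᵥ Sum.elim x 1)
      = star x ⬝ᵥ (A *ᵥ x) + star x ⬝ᵥ b + star b ⬝ᵥ x + c := by
  simp [blk, mulVec, dotProduct, mul_add, Finset.sum_add_distrib, add_assoc, add_left_comm]

lemma posDef_smul_vecMulVec_add_smul_one {n : Type*} [Fintype n] [DecidableEq n] (v : n → ℂ)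
    {δ : ℝ} (hδ0 : 0 < δ) (hδ1 : δ ≤ 1) :
    (((1 - δ : ℝ) : ℂ) • vecMulVec v (star v) + (δ : ℂ) • 1).PosDef :=
  PosDef.posSemidef_add
    ((posSemidef_vecMulVec_self_star v).smul (Complex.zero_le_real.mpr (by linarith)))
    (PosDef.one.smul (Complex.zero_lt_real.mpr hδ0))

theorem stmt_0_general {N : ℕ} (ahat : Fin N → ℂ) (ha : nsq ahat = N)
    (ε η₁ η₂ : ℝ) (hε0 : 0 < ε) (hεN : ε < N) (hη₁ : 0 < η₁) (hη₂ : 0 < η₂) :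
    ∃ X : Matrix (Fin N ⊕ Fin 1) (Fin N ⊕ Fin 1) ℂ, X.PosDef ∧
      (Matrix.trace (blk 1 (-ahat) (nsq ahat - ε) * X)).re < 0 ∧
      (N : ℝ) - η₁ < (Matrix.trace (blk 1 0 0 * X)).re ∧
      (Matrix.trace (blk 1 0 0 * X)).re < (N : ℝ) + η₂ ∧
      Matrix.trace (blk 0 0 1 * X) = 1 := by
  have hN : (0 : ℝ) < N := hε0.trans hεN
  set δ : ℝ := ε / (4 * N)
  have hδ0 : 0 < δ := by positivity
  have hδ1 : δ ≤ 1 := by rw [div_le_one (by positivity)]; linarith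
  have hNδ : N * δ = ε / 4 := by simp only [δ]; field_simp
  set X : Matrix (Fin N ⊕ Fin 1) (Fin N ⊕ Fin 1) ℂ :=
    ((1 - δ : ℝ) : ℂ) • vecMulVec (Sum.elim ahat 1) (star (Sum.elim ahat 1)) + (δ : ℂ) • 1
  have h₁ : trace (blk 1 (-ahat) (nsq ahat - ε) * X) = ((2 * N * δ - ε : ℝ) : ℂ) := by
    simp only [X, trace_mul_smul_vecMulVec_add_smul_one, star_dotProduct_blk_mulVec, trace_blk,
      star_dotProduct_self_eq_nsq, ha, one_mulVec, star_neg, dotProduct_neg, neg_dotProduct,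
      trace_one, Fintype.card_fin]
    push_cast
    ring
  have h₂ : trace (blk 1 0 0 * X) = (N : ℂ) := by
    simp only [X, trace_mul_smul_vecMulVec_add_smul_one, star_dotProduct_blk_mulVec, trace_blk,
      star_dotProduct_self_eq_nsq, ha, one_mulVec, dotProduct_zero, star_zero, zero_dotProduct,
      trace_one, Fintype.card_fin]
    push_cast
    ring
  have h₃ : trace (blk 0 0 1 * X) = 1 := by
    simp only [X, trace_mul_smul_vecMulVec_add_smul_one, star_dotProduct_blk_mulVec, trace_blk,
      zero_mulVec, dotProduct_zero, star_zero, zero_dotProduct, trace_zero]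
    push_cast
    ring
  refine ⟨X, posDef_smul_vecMulVec_add_smul_one _ hδ0 hδ1, ?_, ?_, ?_, h₃⟩ <;>
    simp only [h₁, h₂, Complex.ofReal_re, Complex.natCast_re] <;> linarith

/-- Strict feasibility of the primal SDP relaxation: with
`A₁ = [[I, −â],[−âᴴ, ‖â‖² − ε]]`, `A₂ = [[I, 0],[0, 0]]`, `A₃ = [[0,0],[0,1]]`,
there is a Hermitian positive definite `X` with `tr(A₁X) < 0`,
`N − η₁ < tr(A₂X) < N + η₂` and `tr(A₃X) = 1`. -/
theorem stmt_0 {N : ℕ} (hN : 1 ≤ N) (ahat : Fin N → ℂ) (ha : nsq ahat = N)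
    (ε η₁ η₂ : ℝ) (hε0 : 0 < ε) (hεN : ε < N) (hη₁ : 0 < η₁) (hη₂ : 0 < η₂) :
    ∃ X : Matrix (Fin N ⊕ Fin 1) (Fin N ⊕ Fin 1) ℂ, X.PosDef ∧
      (Matrix.trace (blk 1 (-ahat) (nsq ahat - ε) * X)).re < 0 ∧
      (N : ℝ) - η₁ < (Matrix.trace (blk 1 0 0 * X)).re ∧
      (Matrix.trace (blk 1 0 0 * X)).re < (N : ℝ) + η₂ ∧
      Matrix.trace (blk 0 0 1 * X) = 1 :=
  stmt_0_general ahat ha ε η₁ η₂ hε0 hεN hη₁ hη₂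
end

section
/- Let N ≥ 1, w ∈ ℂ^N, â ∈ ℂ^N, and ε ∈ ℝ. Then there exist reals y₁ < 0, y₂ > 0, y₃ < 0, and y₄ ∈ ℝ such that the (N+1)×(N+1) Hermitian block matrix [[w w^H − (y₁+y₂+y₃) I_N, y₁ â],[y₁ â^H, −y₄ − y₁(‖â‖² − ε)]] is positive definite; i.e., the dual semidefinite program is strictly feasible. -/
open Matrix
open scoped ComplexOrder

/-!
Take `y₁ = y₃ = -1` and `y₂ = 1`, so that the top-left block `w wᴴ + I` is positive definite.
A Hermitian block matrix with positive definite top-left block is positive definite exactly when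
its Schur complement is (positive semidefinite by Schur, and nonsingular by the determinant
formula), so a large enough corner entry works; `y₄` is free to produce it.
-/

theorem Matrix.PosDef.posDef_fromBlocks₁₁_iff {𝕜 m n : Type*} [RCLike 𝕜] [Fintype m]
    [Fintype n] [DecidableEq m] [DecidableEq n] {A : Matrix m m 𝕜} (hA : A.PosDef)
    [Invertible A] (B : Matrix m n 𝕜) (D : Matrix n n 𝕜) :
    (fromBlocks A B Bᴴ D).PosDef ↔ (D - Bᴴ * A⁻¹ * B).PosDef := by
  have hdet : (fromBlocks A B Bᴴ D).det = A.det * (D - Bᴴ * A⁻¹ * B).det := by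
    rw [det_fromBlocks₁₁, invOf_eq_nonsing_inv]
  constructor
  · intro h
    rw [((hA.fromBlocks₁₁ B D).1 h.posSemidef).posDef_iff_det_ne_zero]
    exact right_ne_zero_of_mul (hdet ▸ h.det_pos.ne')
  · intro h
    rw [((hA.fromBlocks₁₁ B D).2 h.posSemidef).posDef_iff_det_ne_zero, hdet]
    exact mul_ne_zero hA.det_pos.ne' h.det_pos.ne'

theorem blk_eq_fromBlocks {N : ℕ} (A : Matrix (Fin N) (Fin N) ℂ) (b : Fin N → ℂ) (c : ℝ) :
    blk A b c = fromBlocks A (replicateCol (Fin 1) b) (replicateCol (Fin 1) b)ᴴ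
      (of fun _ _ => (c : ℂ)) := by
  rw [conjTranspose_replicateCol]
  rfl

theorem exists_posDef_blk {N : ℕ} {A : Matrix (Fin N) (Fin N) ℂ} (hA : A.PosDef)
    (b : Fin N → ℂ) : ∃ c : ℝ, (blk A b c).PosDef := by
  have : Invertible A := hA.isUnit.invertible
  set B := replicateCol (Fin 1) b
  have hS : (Bᴴ * A⁻¹ * B).IsHermitian := isHermitian_conjTranspose_mul_mul B hA.inv.1
  refine ⟨((Bᴴ * A⁻¹ * B) 0 0).re + 1, ?_⟩
  have hSchur : (of fun _ _ => (((Bᴴ * A⁻¹ * B) 0 0).re + 1 : ℝ) : Matrix (Fin 1) (Fin 1) ℂ)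
      - Bᴴ * A⁻¹ * B = 1 := by
    ext i j
    rw [Subsingleton.elim i 0, Subsingleton.elim j 0]
    have hre : (((Bᴴ * A⁻¹ * B) 0 0).re : ℂ) = (Bᴴ * A⁻¹ * B) 0 0 := hS.coe_re_apply_self 0
    simp only [Matrix.sub_apply, of_apply, one_apply_eq, Complex.ofReal_add, Complex.ofReal_one,
      hre]
    ring
  rw [blk_eq_fromBlocks, hA.posDef_fromBlocks₁₁_iff, hSchur]
  exact PosDef.one

theorem stmt_1_general {N : ℕ} (w ahat : Fin N → ℂ) (ε : ℝ) :
    ∃ y₁ y₂ y₃ y₄ : ℝ, y₁ < 0 ∧ 0 < y₂ ∧ y₃ < 0 ∧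
      (blk (Matrix.vecMulVec w (star w) - ((y₁ + y₂ + y₃ : ℝ) : ℂ) • 1)
        ((y₁ : ℂ) • ahat) (-y₄ - y₁ * (nsq ahat - ε))).PosDef := by
  obtain ⟨c, hc⟩ := exists_posDef_blk
    (PosDef.posSemidef_add (posSemidef_vecMulVec_self_star w) PosDef.one) (((-1 : ℝ) : ℂ) • ahat)
  refine ⟨-1, 1, -1, nsq ahat - ε - c, by norm_num, by norm_num, by norm_num, ?_⟩
  convert hc using 2
  · push_cast
    module
  · ring

/-- Strict feasibility of the dual SDP: there exist `y₁ < 0`, `y₂ > 0`, `y₃ < 0`, `y₄ ∈ ℝ`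
such that `[[w wᴴ − (y₁+y₂+y₃) I, y₁ â],[y₁ âᴴ, −y₄ − y₁(‖â‖² − ε)]]` is positive definite. -/
theorem stmt_1 {N : ℕ} (hN : 1 ≤ N) (w ahat : Fin N → ℂ) (ε : ℝ) :
    ∃ y₁ y₂ y₃ y₄ : ℝ, y₁ < 0 ∧ 0 < y₂ ∧ y₃ < 0 ∧
      (blk (Matrix.vecMulVec w (star w) - ((y₁ + y₂ + y₃ : ℝ) : ℂ) • 1)
        ((y₁ : ℂ) • ahat) (-y₄ - y₁ * (nsq ahat - ε))).PosDef :=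
  stmt_1_general w ahat ε
end

section
/- (Proposition 1.) Under the stated primal feasibility, dual feasibility, complementary slackness conditions, and z₀ > 0, the following hold: (1) y₁ < 0; (2) y₂ y₃ = 0; (3) if y₁ + y₂ + y₃ = 0, then y₁ = −y₂ and y₃ = 0. -/
open Matrix
open scoped ComplexOrder

/-!
(1) If `y₁ = 0`, the corner entry `-y₄` of the positive semidefinite matrix `Q` is nonnegative,
so `(N-η₁) y₂ + (N+η₂) y₃ ≥ 1`; but this is `(N-η₁)(y₂+y₃) + (η₁+η₂) y₃ ≤ 0`.
(2) If `y₂` and `y₃` were both nonzero, complementary slackness would make both of the dual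
constraints on `tr Z - x` tight, forcing `(η₁+η₂) z₀ = 0`.
(3) Then `y₂ = -y₁ - y₃ > 0`, so `y₃ = 0` by (2).
-/

lemma nonneg_of_posSemidef_blk {N : ℕ} {A : Matrix (Fin N) (Fin N) ℂ} {b : Fin N → ℂ} {c : ℝ}
    (h : (blk A b c).PosSemidef) : 0 ≤ c :=
  Complex.zero_le_real.mp (h.diag_nonneg (i := Sum.inr 0))

lemma mul_eq_zero_of_slack_of_ne {y y' t a b z x : ℝ}
    (h : y * (t - a * z - x) = 0) (h' : y' * (t - b * z - x) = 0)
    (hab : a ≠ b) (hz : z ≠ 0) : y * y' = 0 := by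
  rcases mul_eq_zero.mp h with hy | htight
  · simp [hy]
  rcases mul_eq_zero.mp h' with hy' | htight'
  · simp [hy']
  exact absurd (mul_right_cancel₀ hz (by linarith)) hab

theorem stmt_3_general {N : ℕ} (ahat : Fin N → ℂ)
    (ε η₁ η₂ : ℝ) (hη₁N : η₁ < N)
    (hηsum : 0 < η₁ + η₂)
    (W : Matrix (Fin N) (Fin N) ℂ) (y₁ y₂ y₃ y₄ : ℝ)
    (Z : Matrix (Fin N) (Fin N) ℂ) (z₀ x : ℝ)
    -- primal feasibility
    (hy₁ : y₁ ≤ 0) (hy₃ : y₃ ≤ 0)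
    (hlin : ((N : ℝ) - η₁) * y₂ + ((N : ℝ) + η₂) * y₃ + y₄ = 1)
    (hysum : y₁ + y₂ + y₃ ≤ 0)
    (hQ : (blk (W - ((y₁ + y₂ + y₃ : ℝ) : ℂ) • 1) ((y₁ : ℂ) • ahat)
        (-y₄ - y₁ * (nsq ahat - ε))).PosSemidef)
    -- complementary slackness
    (hc3 : y₂ * ((Matrix.trace Z).re - ((N : ℝ) - η₁) * z₀ - x) = 0)
    (hc4 : y₃ * ((Matrix.trace Z).re - ((N : ℝ) + η₂) * z₀ - x) = 0)
    -- zero duality gap and positive optimal value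
    (hz₀pos : 0 < z₀) :
    y₁ < 0 ∧ y₂ * y₃ = 0 ∧ (y₁ + y₂ + y₃ = 0 → y₁ = -y₂ ∧ y₃ = 0) := by
  have hcorner := nonneg_of_posSemidef_blk hQ
  have hy₁neg : y₁ < 0 := by
    refine hy₁.lt_of_ne fun hy₁0 => ?_
    subst hy₁0
    linarith [mul_nonpos_of_nonneg_of_nonpos (sub_nonneg.mpr hη₁N.le) hysum,
      mul_nonpos_of_nonneg_of_nonpos hηsum.le hy₃]
  have hy₂y₃ : y₂ * y₃ = 0 :=
    mul_eq_zero_of_slack_of_ne hc3 hc4 (by linarith) hz₀pos.ne'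
  refine ⟨hy₁neg, hy₂y₃, fun hsum0 => ?_⟩
  have hy₃0 : y₃ = 0 := (mul_eq_zero.mp hy₂y₃).resolve_left (by linarith)
  exact ⟨by linarith, hy₃0⟩

/-- Proposition 1: under primal feasibility, dual feasibility, complementary slackness and
`z₀ > 0`, one has (1) `y₁ < 0`; (2) `y₂ y₃ = 0`; (3) if `y₁+y₂+y₃ = 0` then `y₁ = −y₂`
and `y₃ = 0`. -/
theorem stmt_3 {N : ℕ} (hN : 1 ≤ N) (ahat : Fin N → ℂ) (ha : nsq ahat = N)
    (ε η₁ η₂ : ℝ) (hε0 : 0 < ε) (hεN : ε < N) (hη₁0 : 0 ≤ η₁) (hη₁N : η₁ < N)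
    (hη₂ : 0 ≤ η₂) (hηsum : 0 < η₁ + η₂)
    (Rhat : Matrix (Fin N) (Fin N) ℂ) (hR : Rhat.IsHermitian)
    (W : Matrix (Fin N) (Fin N) ℂ) (y₁ y₂ y₃ y₄ : ℝ)
    (Z : Matrix (Fin N) (Fin N) ℂ) (z₁ : Fin N → ℂ) (z₀ x : ℝ)
    -- primal feasibility
    (hW : W.PosSemidef) (hy₁ : y₁ ≤ 0) (hy₂ : 0 ≤ y₂) (hy₃ : y₃ ≤ 0)
    (hlin : ((N : ℝ) - η₁) * y₂ + ((N : ℝ) + η₂) * y₃ + y₄ = 1)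
    (hysum : y₁ + y₂ + y₃ ≤ 0)
    (hQ : (blk (W - ((y₁ + y₂ + y₃ : ℝ) : ℂ) • 1) ((y₁ : ℂ) • ahat)
        (-y₄ - y₁ * (nsq ahat - ε))).PosSemidef)
    -- dual feasibility
    (hZ : Z.IsHermitian) (hRZ : (Rhat - Z).PosSemidef)
    (hd1 : (Matrix.trace Z).re - 2 * (star ahat ⬝ᵥ z₁).re + z₀ * (nsq ahat - ε) ≤ x)
    (hd2 : (Matrix.trace Z).re - ((N : ℝ) - η₁) * z₀ ≥ x)
    (hd3 : (Matrix.trace Z).re - ((N : ℝ) + η₂) * z₀ ≤ x)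
    (hZblk : (blk Z z₁ z₀).PosSemidef) (hx : x ≤ 0)
    -- complementary slackness
    (hc1 : Matrix.trace ((Rhat - Z) * W) = 0)
    (hc2 : y₁ * ((Matrix.trace Z).re - 2 * (star ahat ⬝ᵥ z₁).re + z₀ * (nsq ahat - ε) - x) = 0)
    (hc3 : y₂ * ((Matrix.trace Z).re - ((N : ℝ) - η₁) * z₀ - x) = 0)
    (hc4 : y₃ * ((Matrix.trace Z).re - ((N : ℝ) + η₂) * z₀ - x) = 0)
    (hc5 : (y₁ + y₂ + y₃) * x = 0)
    (hc6 : Matrix.trace ((blk (W - ((y₁ + y₂ + y₃ : ℝ) : ℂ) • 1) ((y₁ : ℂ) • ahat)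
        (-y₄ - y₁ * (nsq ahat - ε))) * (blk Z z₁ z₀)) = 0)
    -- zero duality gap and positive optimal value
    (hz₀ : z₀ = (Matrix.trace (Rhat * W)).re) (hz₀pos : 0 < z₀) :
    y₁ < 0 ∧ y₂ * y₃ = 0 ∧ (y₁ + y₂ + y₃ = 0 → y₁ = -y₂ ∧ y₃ = 0) :=
  stmt_3_general ahat ε η₁ η₂ hη₁N hηsum W y₁ y₂ y₃ y₄ Z z₀ x hy₁ hy₃ hlin hysum hQ hc3 hc4 hz₀pos
end

section
/- (Proposition 2.) Under the stated primal feasibility, dual feasibility, complementary slackness conditions, and z₀ > 0, the following hold: (1) z₀(‖â‖² − ε) = 2Re(â^H z₁) − (tr Z − x), and if y₄ ≠ 1 then z₀(1 − y₄) = y₁ x + (y₂ + y₃) tr Z; (2) −y₄ − y₁(‖â‖² − ε) > 0; (3) if y₁ + y₂ + y₃ = 0, then y₂ > 1/(2N − ε − η₁). -/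
/-!
Taking real parts in the last complementary slackness condition gives
`z₀ − s·tr Z + 2y₁·Re(âᴴz₁) + c·z₀ = 0`, where `s = y₁ + y₂ + y₃ ≤ 0` and
`c = −y₄ − y₁(‖â‖² − ε) ≥ 0` is the corner entry of `Q`. As `z₀ > 0` and `tr Z ≥ 0`, this forces
`y₁ ≠ 0`, so the first dual constraint is active; this is (1). A zero diagonal entry of a positive
semidefinite matrix kills its column, and the column of the corner of `Q` contains `y₁â ≠ 0`,
so `c > 0`; this is (2). If `s = 0`, then (1) and the second dual constraint force `y₃ = 0`, and
`c = y₂(2N − ε − η₁) − 1 > 0` is (3).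
-/

open Matrix
open scoped ComplexOrder

lemma nsq_zero {N : ℕ} : nsq (0 : Fin N → ℂ) = 0 := by simp [nsq]

namespace Matrix

variable {n 𝕜 : Type*} [Fintype n] [DecidableEq n] [RCLike 𝕜]

lemma PosSemidef.apply_eq_zero_of_diag_eq_zero {A : Matrix n n 𝕜} (hA : A.PosSemidef) {i : n}
    (hi : A i i = 0) (j : n) : A j i = 0 := by
  have hcol : A *ᵥ Pi.single i 1 = 0 :=
    (hA.dotProduct_mulVec_zero_iff _).mp (by simpa [mulVec_single_one] using hi)
  simpa [mulVec_single_one] using congrFun hcol j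

lemma PosSemidef.of_blk {N : ℕ} {A : Matrix (Fin N) (Fin N) ℂ} {b : Fin N → ℂ} {c : ℝ}
    (h : (blk A b c).PosSemidef) : A.PosSemidef :=
  h.submatrix Sum.inl

lemma PosSemidef.blk_corner_nonneg {N : ℕ} {A : Matrix (Fin N) (Fin N) ℂ} {b : Fin N → ℂ}
    {c : ℝ} (h : (blk A b c).PosSemidef) : 0 ≤ c :=
  Complex.zero_le_real.mp (h.diag_nonneg (i := Sum.inr 0))

lemma PosSemidef.blk_eq_zero_of_corner_eq_zero {N : ℕ} {A : Matrix (Fin N) (Fin N) ℂ}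
    {b : Fin N → ℂ} (h : (blk A b 0).PosSemidef) : b = 0 := by
  funext k
  simpa [blk] using h.apply_eq_zero_of_diag_eq_zero (i := Sum.inr 0) (by simp [blk]) (Sum.inl k)

end Matrix

lemma re_trace_blk_mul {N : ℕ} (A Z : Matrix (Fin N) (Fin N) ℂ) (b z : Fin N → ℂ) (c w : ℝ) :
    (trace (blk A b c * blk Z z w)).re
      = (trace (A * Z)).re + 2 * (star b ⬝ᵥ z).re + c * w := by
  have hconj : ∑ i, b i * star (z i) = star (star b ⬝ᵥ z) := by
    simp [dotProduct, star_sum, mul_comm]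
  have htr : trace (blk A b c * blk Z z w)
      = trace (A * Z) + star (star b ⬝ᵥ z) + star b ⬝ᵥ z + ((c * w : ℝ) : ℂ) := by
    rw [← hconj]
    simp only [blk, trace, diag, mul_apply, Fintype.sum_sum_type, fromBlocks_apply₁₁,
      fromBlocks_apply₁₂, fromBlocks_apply₂₁, fromBlocks_apply₂₂, of_apply, Fin.sum_univ_one,
      dotProduct, Pi.star_apply, Finset.sum_add_distrib]
    push_cast
    ring
  rw [htr]
  simp only [Complex.add_re, Complex.star_def, Complex.conj_re, Complex.ofReal_re]
  ring

lemma re_trace_blk_sub_smul_one_mul {N : ℕ} (W Z : Matrix (Fin N) (Fin N) ℂ) (a z : Fin N → ℂ)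
    (s y c w : ℝ) :
    (trace (blk (W - (s : ℂ) • 1) ((y : ℂ) • a) c * blk Z z w)).re
      = (trace (W * Z)).re - s * (trace Z).re + 2 * y * (star a ⬝ᵥ z).re + c * w := by
  rw [re_trace_blk_mul, sub_mul, trace_sub, smul_mul, one_mul, trace_smul, star_smul,
    smul_dotProduct, Complex.star_def, Complex.conj_ofReal]
  simp only [Complex.sub_re, smul_eq_mul, Complex.re_ofReal_mul]
  ring

lemma one_div_lt_of_sum_eq_zero {N ε η₁ η₂ y₁ y₂ y₃ y₄ : ℝ} (hεN : ε < N) (hη₁N : η₁ < N)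
    (hη : 0 < η₁ + η₂) (hy₃ : y₃ ≤ 0) (hlin : (N - η₁) * y₂ + (N + η₂) * y₃ + y₄ = 1)
    (hs : y₁ + y₂ + y₃ = 0) (hbound : -y₁ * (N - η₁) ≤ 1 - y₄) (hc : 0 < -y₄ - y₁ * (N - ε)) :
    1 / (2 * N - ε - η₁) < y₂ := by
  have hy₃0 : y₃ = 0 := by nlinarith
  rw [div_lt_iff₀ (by linarith)]
  nlinarith

theorem stmt_4_general {N : ℕ} (hN : 1 ≤ N) (ahat : Fin N → ℂ) (ha : nsq ahat = N)
    (ε η₁ η₂ : ℝ) (hεN : ε < N) (hη₁N : η₁ < N)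
    (hηsum : 0 < η₁ + η₂)
    (Rhat : Matrix (Fin N) (Fin N) ℂ)
    (W : Matrix (Fin N) (Fin N) ℂ) (y₁ y₂ y₃ y₄ : ℝ)
    (Z : Matrix (Fin N) (Fin N) ℂ) (z₁ : Fin N → ℂ) (z₀ x : ℝ)
    -- primal feasibility
    (hy₁ : y₁ ≤ 0) (hy₃ : y₃ ≤ 0)
    (hlin : ((N : ℝ) - η₁) * y₂ + ((N : ℝ) + η₂) * y₃ + y₄ = 1)
    (hysum : y₁ + y₂ + y₃ ≤ 0)
    (hQ : (blk (W - ((y₁ + y₂ + y₃ : ℝ) : ℂ) • 1) ((y₁ : ℂ) • ahat)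
        (-y₄ - y₁ * (nsq ahat - ε))).PosSemidef)
    -- dual feasibility
    (hd2 : (Matrix.trace Z).re - ((N : ℝ) - η₁) * z₀ ≥ x)
    (hZblk : (blk Z z₁ z₀).PosSemidef)
    -- complementary slackness
    (hc1 : Matrix.trace ((Rhat - Z) * W) = 0)
    (hc2 : y₁ * ((Matrix.trace Z).re - 2 * (star ahat ⬝ᵥ z₁).re + z₀ * (nsq ahat - ε) - x) = 0)
    (hc6 : Matrix.trace ((blk (W - ((y₁ + y₂ + y₃ : ℝ) : ℂ) • 1) ((y₁ : ℂ) • ahat)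
        (-y₄ - y₁ * (nsq ahat - ε))) * (blk Z z₁ z₀)) = 0)
    -- zero duality gap and positive optimal value
    (hz₀ : z₀ = (Matrix.trace (Rhat * W)).re) (hz₀pos : 0 < z₀) :
    z₀ * (nsq ahat - ε) = 2 * (star ahat ⬝ᵥ z₁).re - ((Matrix.trace Z).re - x) ∧
    (y₄ ≠ 1 → z₀ * (1 - y₄) = y₁ * x + (y₂ + y₃) * (Matrix.trace Z).re) ∧
    0 < -y₄ - y₁ * (nsq ahat - ε) ∧
    (y₁ + y₂ + y₃ = 0 → y₂ > 1 / (2 * (N : ℝ) - ε - η₁)) := by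
  set s := y₁ + y₂ + y₃
  set c := -y₄ - y₁ * (nsq ahat - ε)
  set T := (trace Z).re
  set D := (star ahat ⬝ᵥ z₁).re
  have hWZ : (trace (W * Z)).re = z₀ := by
    rw [sub_mul, trace_sub, sub_eq_zero] at hc1
    rw [hz₀, hc1, trace_mul_comm]
  have hslack : z₀ - s * T + 2 * y₁ * D + c * z₀ = 0 := by
    have h := congrArg Complex.re hc6
    rwa [re_trace_blk_sub_smul_one_mul, hWZ, Complex.zero_re] at h
  have hc0 : 0 ≤ c := hQ.blk_corner_nonneg
  have hT : 0 ≤ T := (Complex.le_def.mp hZblk.of_blk.trace_nonneg).1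
  have hy₁ne : y₁ ≠ 0 := by
    intro h0
    rw [h0] at hslack
    nlinarith [mul_nonneg hc0 hz₀pos.le, mul_nonpos_of_nonpos_of_nonneg hysum hT]
  have hdual : T - 2 * D + z₀ * (nsq ahat - ε) - x = 0 := (mul_eq_zero.mp hc2).resolve_left hy₁ne
  have hvalue : z₀ * (1 - y₄) = y₁ * x + (y₂ + y₃) * T := by
    linear_combination hslack + y₁ * hdual
  have hc_ne : c ≠ 0 := by
    intro h0
    rw [h0] at hQ
    have hahat : ahat = 0 :=
      (smul_eq_zero.mp hQ.blk_eq_zero_of_corner_eq_zero).resolve_left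
        (by exact_mod_cast hy₁ne)
    rw [hahat, nsq_zero] at ha
    linarith [show (1 : ℝ) ≤ N by exact_mod_cast hN]
  have hc : 0 < c := lt_of_le_of_ne hc0 (Ne.symm hc_ne)
  refine ⟨by linarith, fun _ => hvalue, hc, fun hs => ?_⟩
  -- `z₀ (1 - y₄) = -y₁ (tr Z - x) ≥ -y₁ (N - η₁) z₀` by `hvalue`, `hs` and `hd2`
  have hbound : -y₁ * (N - η₁) ≤ 1 - y₄ :=
    le_of_mul_le_mul_left (by nlinarith) hz₀pos
  exact one_div_lt_of_sum_eq_zero hεN hη₁N hηsum hy₃ hlin hs hbound (ha ▸ hc)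

/-- Proposition 2: under primal feasibility, dual feasibility, complementary slackness and
`z₀ > 0`, one has (1) `z₀(‖â‖²−ε) = 2Re(âᴴz₁) − (tr Z − x)` and, for `y₄ ≠ 1`,
`z₀(1−y₄) = y₁x + (y₂+y₃)tr Z`; (2) `−y₄ − y₁(‖â‖²−ε) > 0`; (3) if `y₁+y₂+y₃ = 0`
then `y₂ > 1/(2N − ε − η₁)`. -/
theorem stmt_4 {N : ℕ} (hN : 1 ≤ N) (ahat : Fin N → ℂ) (ha : nsq ahat = N)
    (ε η₁ η₂ : ℝ) (hε0 : 0 < ε) (hεN : ε < N) (hη₁0 : 0 ≤ η₁) (hη₁N : η₁ < N)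
    (hη₂ : 0 ≤ η₂) (hηsum : 0 < η₁ + η₂)
    (Rhat : Matrix (Fin N) (Fin N) ℂ) (hR : Rhat.IsHermitian)
    (W : Matrix (Fin N) (Fin N) ℂ) (y₁ y₂ y₃ y₄ : ℝ)
    (Z : Matrix (Fin N) (Fin N) ℂ) (z₁ : Fin N → ℂ) (z₀ x : ℝ)
    -- primal feasibility
    (hW : W.PosSemidef) (hy₁ : y₁ ≤ 0) (hy₂ : 0 ≤ y₂) (hy₃ : y₃ ≤ 0)
    (hlin : ((N : ℝ) - η₁) * y₂ + ((N : ℝ) + η₂) * y₃ + y₄ = 1)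
    (hysum : y₁ + y₂ + y₃ ≤ 0)
    (hQ : (blk (W - ((y₁ + y₂ + y₃ : ℝ) : ℂ) • 1) ((y₁ : ℂ) • ahat)
        (-y₄ - y₁ * (nsq ahat - ε))).PosSemidef)
    -- dual feasibility
    (hZ : Z.IsHermitian) (hRZ : (Rhat - Z).PosSemidef)
    (hd1 : (Matrix.trace Z).re - 2 * (star ahat ⬝ᵥ z₁).re + z₀ * (nsq ahat - ε) ≤ x)
    (hd2 : (Matrix.trace Z).re - ((N : ℝ) - η₁) * z₀ ≥ x)
    (hd3 : (Matrix.trace Z).re - ((N : ℝ) + η₂) * z₀ ≤ x)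
    (hZblk : (blk Z z₁ z₀).PosSemidef) (hx : x ≤ 0)
    -- complementary slackness
    (hc1 : Matrix.trace ((Rhat - Z) * W) = 0)
    (hc2 : y₁ * ((Matrix.trace Z).re - 2 * (star ahat ⬝ᵥ z₁).re + z₀ * (nsq ahat - ε) - x) = 0)
    (hc3 : y₂ * ((Matrix.trace Z).re - ((N : ℝ) - η₁) * z₀ - x) = 0)
    (hc4 : y₃ * ((Matrix.trace Z).re - ((N : ℝ) + η₂) * z₀ - x) = 0)
    (hc5 : (y₁ + y₂ + y₃) * x = 0)
    (hc6 : Matrix.trace ((blk (W - ((y₁ + y₂ + y₃ : ℝ) : ℂ) • 1) ((y₁ : ℂ) • ahat)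
        (-y₄ - y₁ * (nsq ahat - ε))) * (blk Z z₁ z₀)) = 0)
    -- zero duality gap and positive optimal value
    (hz₀ : z₀ = (Matrix.trace (Rhat * W)).re) (hz₀pos : 0 < z₀) :
    z₀ * (nsq ahat - ε) = 2 * (star ahat ⬝ᵥ z₁).re - ((Matrix.trace Z).re - x) ∧
    (y₄ ≠ 1 → z₀ * (1 - y₄) = y₁ * x + (y₂ + y₃) * (Matrix.trace Z).re) ∧
    0 < -y₄ - y₁ * (nsq ahat - ε) ∧
    (y₁ + y₂ + y₃ = 0 → y₂ > 1 / (2 * (N : ℝ) - ε - η₁)) :=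
  stmt_4_general hN ahat ha ε η₁ η₂ hεN hη₁N hηsum Rhat W y₁ y₂ y₃ y₄ Z z₁ z₀ x hy₁ hy₃ hlin hysum
    hQ hd2 hZblk hc1 hc2 hc6 hz₀ hz₀pos
end

section
/- (Theorem 1.) Let R̂ and Z be Hermitian N×N matrices with R̂ − Z positive semidefinite, let w, â ∈ ℂ^N, ε ∈ ℝ, and y₁, y₂, y₃, y₄ ∈ ℝ, and suppose: (i) tr((R̂ − Z) w w^H) = 0; (ii) the (N+1)×(N+1) block matrix [[w w^H − (y₁+y₂+y₃) I, y₁ â],[y₁ â^H, −y₄ − y₁(‖â‖² − ε)]] is positive semidefinite; (iii) −y₄ − y₁(‖â‖² − ε) > 0, and define ā = y₁ â / sqrt(−y₄ − y₁(‖â‖² − ε)); (iv) ā and w are linearly independent over ℂ. Then: (1) (R̂ − Z) w = 0; (2) y₁ + y₂ + y₃ ≤ −(‖ā‖² − ‖w‖² + sqrt((‖ā‖² + ‖w‖²)² − 4|ā^H w|²))/2 < 0. -/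
/-!
Since `R̂ - Z ⪰ 0` and `wᴴ (R̂ - Z) w = tr ((R̂ - Z) w wᴴ) = 0`, `w` lies in the kernel of `R̂ - Z`.
Taking the Schur complement of the positive corner `c = -y₄ - y₁ (‖â‖² - ε)` turns the block
condition into `w wᴴ - ā āᴴ - (y₁ + y₂ + y₃) I ⪰ 0`, because `ā āᴴ = y₁² â âᴴ / c`. Hence
`y₁ + y₂ + y₃` is at most every eigenvalue of the rank-two matrix `w wᴴ - ā āᴴ`. With
`s = āᴴ w` and `α` the larger root of `α² - (‖ā‖² + ‖w‖²) α + |s|² = 0`, the vector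
`α ā - s̄ w` is an eigenvector for `‖w‖² - α`, which is the claimed bound; it is negative by
strict Cauchy–Schwarz for the independent vectors `ā`, `w`.
-/

open Matrix
open scoped ComplexOrder

namespace Matrix

variable {n : Type*} [Fintype n]

lemma vecMulVec_star_mulVec (u x : n → ℂ) :
    vecMulVec u (star u) *ᵥ x = (star u ⬝ᵥ x) • u := by
  rw [vecMulVec_mulVec, op_smul_eq_smul]

omit [Fintype n] in
lemma vecMulVec_real_smul_star (t : ℝ) (u : n → ℂ) :
    vecMulVec ((t : ℂ) • u) (star ((t : ℂ) • u)) = ((t ^ 2 : ℝ) : ℂ) • vecMulVec u (star u) := by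
  rw [star_smul, Complex.star_def, Complex.conj_ofReal, smul_vecMulVec, vecMulVec_smul, smul_smul,
    ← Complex.ofReal_mul, sq]

lemma PosSemidef.mulVec_eq_zero_of_trace_mul_vecMulVec_eq_zero {P : Matrix n n ℂ}
    (hP : P.PosSemidef) {w : n → ℂ} (h : trace (P * vecMulVec w (star w)) = 0) : P *ᵥ w = 0 := by
  rw [← hP.dotProduct_mulVec_zero_iff, ← h, mul_vecMulVec, trace_vecMulVec, dotProduct_comm]

lemma PosSemidef.le_of_mulVec_eq_smul [DecidableEq n] {M : Matrix n n ℂ} {l μ : ℝ}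
    (h : (M - (l : ℂ) • 1).PosSemidef) {v : n → ℂ} (hv : v ≠ 0) (hMv : M *ᵥ v = (μ : ℂ) • v) :
    l ≤ μ := by
  have hq := h.dotProduct_mulVec_nonneg v
  rw [sub_mulVec, smul_mulVec, one_mulVec, hMv, ← sub_smul, dotProduct_smul, smul_eq_mul,
    ← Complex.ofReal_sub] at hq
  by_contra! hlt
  have hneg : ((μ - l : ℝ) : ℂ) < 0 := by exact_mod_cast sub_neg.mpr hlt
  exact (mul_neg_of_neg_of_pos hneg (dotProduct_star_self_pos_iff.mpr hv)).not_ge hq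

end Matrix

lemma posSemidef_sub_vecMulVec_of_blk {N : ℕ} {A : Matrix (Fin N) (Fin N) ℂ} {b : Fin N → ℂ}
    {c : ℝ} (hc : 0 < c) (h : (blk A b c).PosSemidef) :
    (A - ((c⁻¹ : ℝ) : ℂ) • vecMulVec b (star b)).PosSemidef := by
  have hD : (of fun _ _ => (c : ℂ) : Matrix (Fin 1) (Fin 1) ℂ) = (c : ℂ) • 1 := by
    ext i j
    fin_cases i; fin_cases j
    simp
  have hDpos : ((c : ℂ) • 1 : Matrix (Fin 1) (Fin 1) ℂ).PosDef :=
    PosDef.one.smul (Complex.zero_lt_real.mpr hc)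
  let : Invertible ((c : ℂ) • 1 : Matrix (Fin 1) (Fin 1) ℂ) := hDpos.isUnit.invertible
  have hDinv : ((c : ℂ) • 1 : Matrix (Fin 1) (Fin 1) ℂ)⁻¹ = ((c⁻¹ : ℝ) : ℂ) • 1 := by
    refine inv_eq_right_inv ?_
    rw [smul_mul_smul, mul_one, ← Complex.ofReal_mul, mul_inv_cancel₀ hc.ne', Complex.ofReal_one,
      one_smul]
  have hblk : blk A b c =
      fromBlocks A (replicateCol (Fin 1) b) (replicateCol (Fin 1) b)ᴴ ((c : ℂ) • 1) := by
    rw [conjTranspose_replicateCol, ← hD]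
    rfl
  rw [hblk, PosDef.fromBlocks₂₂ _ _ hDpos, hDinv, Matrix.mul_smul, Matrix.mul_one, Matrix.smul_mul,
    conjTranspose_replicateCol] at h
  rwa [vecMulVec_eq (Fin 1)]

section RankTwo

variable {N : ℕ}

lemma dotProduct_star_self_eq_nsq (a : Fin N → ℂ) : star a ⬝ᵥ a = (nsq a : ℂ) := by
  simp only [dotProduct, nsq, Complex.ofReal_sum, Pi.star_apply, Complex.normSq_eq_conj_mul_self,
    Complex.star_def]

lemma nsq_eq_norm_sq (a : Fin N → ℂ) : nsq a = ‖WithLp.toLp 2 a‖ ^ 2 := by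
  simp [EuclideanSpace.norm_sq_eq, nsq, Complex.normSq_eq_norm_sq]

lemma norm_dotProduct_sq_lt_of_linearIndependent {a w : Fin N → ℂ}
    (h : LinearIndependent ℂ ![a, w]) : ‖star a ⬝ᵥ w‖ ^ 2 < nsq a * nsq w := by
  set x : EuclideanSpace ℂ (Fin N) := WithLp.toLp 2 a
  set y : EuclideanSpace ℂ (Fin N) := WithLp.toLp 2 w
  have hx : x ≠ 0 := by simpa [x] using h.ne_zero 0
  have hy : y ≠ 0 := by simpa [y] using h.ne_zero 1
  have hne : ‖inner ℂ x y‖ ≠ ‖x‖ * ‖y‖ := by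
    rw [Ne, norm_inner_eq_norm_iff hx hy]
    rintro ⟨r, -, hr⟩
    have hcomb : r • a + (-1 : ℂ) • w = 0 := by
      rw [show w = r • a from congrArg WithLp.ofLp hr]
      simp
    exact one_ne_zero (neg_eq_zero.mp (LinearIndependent.pair_iff.mp h r (-1) hcomb).2)
  have hinner : star a ⬝ᵥ w = inner ℂ x y := by
    rw [EuclideanSpace.inner_toLp_toLp, dotProduct_comm]
  rw [hinner, nsq_eq_norm_sq, nsq_eq_norm_sq, ← mul_pow]
  exact pow_lt_pow_left₀ (lt_of_le_of_ne (norm_inner_le_norm x y) hne) (norm_nonneg _) two_ne_zero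

lemma mulVec_eq_smul_of_sq_sub_mul_add_eq_zero (a w : Fin N → ℂ) {α : ℝ}
    (hα : α ^ 2 - (nsq a + nsq w) * α + ‖star a ⬝ᵥ w‖ ^ 2 = 0) :
    (vecMulVec w (star w) - vecMulVec a (star a)) *ᵥ ((α : ℂ) • a - star (star a ⬝ᵥ w) • w) =
      ((nsq w - α : ℝ) : ℂ) • ((α : ℂ) • a - star (star a ⬝ᵥ w) • w) := by
  set s := star a ⬝ᵥ w with hs
  have hwa : star w ⬝ᵥ a = star s := star_dotProduct w a
  have hss : star s * s = ((‖s‖ ^ 2 : ℝ) : ℂ) := by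
    rw [mul_comm, Complex.star_def, Complex.mul_conj, Complex.normSq_eq_norm_sq]
  have hαC : (α : ℂ) ^ 2 - ((nsq a : ℂ) + nsq w) * α + ((‖s‖ ^ 2 : ℝ) : ℂ) = 0 := by
    exact_mod_cast hα
  simp only [sub_mulVec, vecMulVec_star_mulVec, dotProduct_sub, dotProduct_smul, hwa,
    dotProduct_star_self_eq_nsq, smul_eq_mul, ← hs]
  ext i
  simp only [Pi.sub_apply, Pi.smul_apply, smul_eq_mul, Complex.ofReal_sub]
  linear_combination (a i) * hαC + (a i) * hss

noncomputable def rankTwoMinEigenvalue (a w : Fin N → ℂ) : ℝ :=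
  -((nsq a - nsq w + Real.sqrt ((nsq a + nsq w) ^ 2 - 4 * ‖star a ⬝ᵥ w‖ ^ 2)) / 2)

lemma rankTwoMinEigenvalue_neg {a w : Fin N → ℂ} (h : LinearIndependent ℂ ![a, w]) :
    rankTwoMinEigenvalue a w < 0 := by
  have hS := norm_dotProduct_sq_lt_of_linearIndependent h
  have hr := Real.lt_sqrt_of_sq_lt (x := nsq w - nsq a)
    (y := (nsq a + nsq w) ^ 2 - 4 * ‖star a ⬝ᵥ w‖ ^ 2) (by linarith)
  rw [rankTwoMinEigenvalue]
  linarith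

lemma le_rankTwoMinEigenvalue_of_posSemidef {a w : Fin N → ℂ} (h : LinearIndependent ℂ ![a, w])
    {l : ℝ} (hM : (vecMulVec w (star w) - vecMulVec a (star a) - (l : ℂ) • 1).PosSemidef) :
    l ≤ rankTwoMinEigenvalue a w := by
  have hS := norm_dotProduct_sq_lt_of_linearIndependent h
  have hA : 0 ≤ nsq a := (nsq_eq_norm_sq a).symm ▸ sq_nonneg _
  have hW : 0 ≤ nsq w := (nsq_eq_norm_sq w).symm ▸ sq_nonneg _
  have hdisc : 0 ≤ (nsq a + nsq w) ^ 2 - 4 * ‖star a ⬝ᵥ w‖ ^ 2 := by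
    nlinarith [sq_nonneg (nsq a - nsq w)]
  set r := Real.sqrt ((nsq a + nsq w) ^ 2 - 4 * ‖star a ⬝ᵥ w‖ ^ 2)
  have hr : 0 ≤ r := Real.sqrt_nonneg _
  have hr2 : r ^ 2 = (nsq a + nsq w) ^ 2 - 4 * ‖star a ⬝ᵥ w‖ ^ 2 := Real.sq_sqrt hdisc
  set α := (nsq a + nsq w + r) / 2 with hα_def
  have hα : α ^ 2 - (nsq a + nsq w) * α + ‖star a ⬝ᵥ w‖ ^ 2 = 0 := by
    linear_combination hr2 / 4
  have hαpos : 0 < α := by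
    nlinarith [sq_nonneg ‖star a ⬝ᵥ w‖, mul_nonneg hA hW, mul_nonneg hA hr]
  have hv : (α : ℂ) • a - star (star a ⬝ᵥ w) • w ≠ 0 := by
    intro hv0
    rw [sub_eq_add_neg, ← neg_smul] at hv0
    exact hαpos.ne' (Complex.ofReal_eq_zero.mp (LinearIndependent.pair_iff.mp h _ _ hv0).1)
  have hle := hM.le_of_mulVec_eq_smul hv (mulVec_eq_smul_of_sq_sub_mul_add_eq_zero a w hα)
  change l ≤ -((nsq a - nsq w + r) / 2)
  linarith

end RankTwo

theorem stmt_5_general {N : ℕ} (Rhat Z : Matrix (Fin N) (Fin N) ℂ)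
    (hRZ : (Rhat - Z).PosSemidef)
    (w ahat : Fin N → ℂ) (ε y₁ y₂ y₃ y₄ : ℝ)
    (h1 : Matrix.trace ((Rhat - Z) * Matrix.vecMulVec w (star w)) = 0)
    (h2 : (blk (Matrix.vecMulVec w (star w) - ((y₁ + y₂ + y₃ : ℝ) : ℂ) • 1)
        ((y₁ : ℂ) • ahat) (-y₄ - y₁ * (nsq ahat - ε))).PosSemidef)
    (h3 : 0 < -y₄ - y₁ * (nsq ahat - ε))
    (abar : Fin N → ℂ)
    (habar : abar = ((y₁ / Real.sqrt (-y₄ - y₁ * (nsq ahat - ε)) : ℝ) : ℂ) • ahat)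
    (h4 : LinearIndependent ℂ ![abar, w]) :
    (Rhat - Z).mulVec w = 0 ∧
    y₁ + y₂ + y₃ ≤
      -((nsq abar - nsq w +
        Real.sqrt ((nsq abar + nsq w) ^ 2 - 4 * ‖star abar ⬝ᵥ w‖ ^ 2)) / 2) ∧
    -((nsq abar - nsq w +
        Real.sqrt ((nsq abar + nsq w) ^ 2 - 4 * ‖star abar ⬝ᵥ w‖ ^ 2)) / 2) < 0 := by
  have hschur := posSemidef_sub_vecMulVec_of_blk h3 h2
  have habar_outer : (((-y₄ - y₁ * (nsq ahat - ε))⁻¹ : ℝ) : ℂ) •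
      vecMulVec ((y₁ : ℂ) • ahat) (star ((y₁ : ℂ) • ahat)) = vecMulVec abar (star abar) := by
    rw [habar, vecMulVec_real_smul_star, vecMulVec_real_smul_star, smul_smul,
      ← Complex.ofReal_mul, div_pow, Real.sq_sqrt h3.le, inv_mul_eq_div]
  rw [habar_outer, sub_right_comm] at hschur
  exact ⟨hRZ.mulVec_eq_zero_of_trace_mul_vecMulVec_eq_zero h1,
    le_rankTwoMinEigenvalue_of_posSemidef h4 hschur, rankTwoMinEigenvalue_neg h4⟩

/-- Theorem 1: with `R̂ − Z ⪰ 0`, `tr((R̂−Z)wwᴴ) = 0`, the block matrix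
`[[wwᴴ − (y₁+y₂+y₃)I, y₁â],[y₁âᴴ, −y₄−y₁(‖â‖²−ε)]] ⪰ 0`, `−y₄−y₁(‖â‖²−ε) > 0`,
`ā = y₁â/√(−y₄−y₁(‖â‖²−ε))` and `ā, w` linearly independent, one has
(1) `(R̂−Z)w = 0`; (2) `y₁+y₂+y₃ ≤ −(‖ā‖²−‖w‖²+√((‖ā‖²+‖w‖²)²−4|āᴴw|²))/2 < 0`. -/
theorem stmt_5 {N : ℕ} (Rhat Z : Matrix (Fin N) (Fin N) ℂ)
    (hR : Rhat.IsHermitian) (hZ : Z.IsHermitian) (hRZ : (Rhat - Z).PosSemidef)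
    (w ahat : Fin N → ℂ) (ε y₁ y₂ y₃ y₄ : ℝ)
    (h1 : Matrix.trace ((Rhat - Z) * Matrix.vecMulVec w (star w)) = 0)
    (h2 : (blk (Matrix.vecMulVec w (star w) - ((y₁ + y₂ + y₃ : ℝ) : ℂ) • 1)
        ((y₁ : ℂ) • ahat) (-y₄ - y₁ * (nsq ahat - ε))).PosSemidef)
    (h3 : 0 < -y₄ - y₁ * (nsq ahat - ε))
    (abar : Fin N → ℂ)
    (habar : abar = ((y₁ / Real.sqrt (-y₄ - y₁ * (nsq ahat - ε)) : ℝ) : ℂ) • ahat)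
    (h4 : LinearIndependent ℂ ![abar, w]) :
    (Rhat - Z).mulVec w = 0 ∧
    y₁ + y₂ + y₃ ≤
      -((nsq abar - nsq w +
        Real.sqrt ((nsq abar + nsq w) ^ 2 - 4 * ‖star abar ⬝ᵥ w‖ ^ 2)) / 2) ∧
    -((nsq abar - nsq w +
        Real.sqrt ((nsq abar + nsq w) ^ 2 - 4 * ‖star abar ⬝ᵥ w‖ ^ 2)) / 2) < 0 :=
  stmt_5_general Rhat Z hRZ w ahat ε y₁ y₂ y₃ y₄ h1 h2 h3 abar habar h4
end

section
/- (Theorem 2.) Let N ≥ 1, â ∈ ℂ^N with ‖â‖² = N, reals ε, η₁, η₂ with 0 < ε < N, η₁, η₂ ≥ 0, and R̂ a Hermitian positive semidefinite N×N matrix. Suppose (W, y₁, y₂, y₃, y₄) is feasible for the tightened LMI relaxation, that y := y₁ + y₂ + y₃ < 0 and −y₄ − y₁(‖â‖² − ε) > 0, define ā = y₁ â / sqrt(−y₄ − y₁(‖â‖² − ε)), and assume y² + y(‖ā‖² − tr W) + ā^H W ā − ‖ā‖² tr W ≥ 0. Then there exists w ∈ ℂ^N such that (w w^H, y₁, y₂,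 y₃, y₄) is feasible for the tightened LMI relaxation and tr(R̂ (w w^H)) = tr(R̂ W). In particular, if in addition W minimizes tr(R̂ ·) over all feasible tuples, then the tightened LMI relaxation has a rank-one optimal solution. -/
open Matrix
open scoped ComplexOrder

/-- Feasibility for the tightened LMI relaxation: `W ⪰ 0`, `y₁ ≤ 0`, `y₂ ≥ 0`, `y₃ ≤ 0`,
`(N−η₁)y₂ + (N+η₂)y₃ + y₄ = 1`, `y₁+y₂+y₃ ≤ 0`, and the block matrix
`[[W − (y₁+y₂+y₃)I, y₁â],[y₁âᴴ, −y₄ − y₁(‖â‖² − ε)]]` is positive semidefinite. -/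
noncomputable def Feas {N : ℕ} (ahat : Fin N → ℂ) (ε η₁ η₂ : ℝ)
    (W : Matrix (Fin N) (Fin N) ℂ) (y₁ y₂ y₃ y₄ : ℝ) : Prop :=
  W.PosSemidef ∧ y₁ ≤ 0 ∧ 0 ≤ y₂ ∧ y₃ ≤ 0 ∧
  ((N : ℝ) - η₁) * y₂ + ((N : ℝ) + η₂) * y₃ + y₄ = 1 ∧
  y₁ + y₂ + y₃ ≤ 0 ∧
  (blk (W - ((y₁ + y₂ + y₃ : ℝ) : ℂ) • 1) ((y₁ : ℂ) • ahat)
    (-y₄ - y₁ * (nsq ahat - ε))).PosSemidef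

/-
With `m = -(y₁ + y₂ + y₃) > 0`, the Schur complement turns the block constraint for `w wᴴ` into
`w wᴴ + m I - ā āᴴ ⪰ 0`, i.e. `|āᴴx|² ≤ m ‖x‖² + |wᴴx|²` for all `x`; splitting `ā` and `x`
along `w`, this is a weighted Cauchy–Schwarz inequality and holds as soon as
`(m + ‖w‖²)(‖ā‖² - m) ≤ |wᴴā|²`.

To find such a `w`, decompose `W = ∑ vₖ vₖᴴ` with `vₖᴴ (R̂ - μ I) vₖ = 0` for `μ = tr(R̂ W) / tr W`
(Sturm–Zhang: two terms of opposite sign can be rotated into one isotropic term without changing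
the sum). Averaging over `k` gives a nonzero `vₖ` with `|vₖᴴā|² / ‖vₖ‖² ≥ āᴴWā / tr W`, and the
rescaling `w` of `vₖ` with `‖w‖² = tr W` has `wᴴR̂w = tr(R̂ W)` and `|wᴴā|² ≥ āᴴWā`. The hypothesis
on `y` is then exactly the inequality above.
-/

open scoped InnerProductSpace

theorem sq_le_of_weighted_cauchy_schwarz {m s p R β X : ℝ} (hm : 0 < m) (hs : 0 ≤ s)
    (h : m * s * p ^ 2 + (m + s) * R ^ 2 ≤ m * (m + s)) :
    (p * s * β + R * X) ^ 2 ≤ m * (s * β ^ 2 + X ^ 2) + (s * β) ^ 2 := by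
  rcases hs.eq_or_lt with rfl | hs
  · nlinarith [sq_nonneg X]
  have hK : 0 ≤ m * (m + s) - m * s * p ^ 2 - (m + s) * R ^ 2 := by linarith
  have key : m * (m + s) * s * (m * (s * β ^ 2 + X ^ 2) + (s * β) ^ 2 - (p * s * β + R * X) ^ 2) =
      (p * m * s * X - R * (m + s) * (s * β)) ^ 2 +
        (m * (m + s) - m * s * p ^ 2 - (m + s) * R ^ 2) *
          ((m + s) * (s * β) ^ 2 + m * s * X ^ 2) := by
    ring
  have := (mul_nonneg_iff_of_pos_left (by positivity)).mp
    (key ▸ add_nonneg (sq_nonneg _) (mul_nonneg hK (by positivity)))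
  linarith

theorem Multiset.exists_mem_ne_zero_le_of_sum_le {α β : Type*} [Zero α] [AddCommMonoid β]
    [LinearOrder β] [IsOrderedCancelAddMonoid β] {s : Multiset α} {f g : α → β}
    (hs : ∃ v ∈ s, v ≠ 0) (h0 : f 0 = g 0) (h : (s.map f).sum ≤ (s.map g).sum) :
    ∃ v ∈ s, v ≠ 0 ∧ f v ≤ g v := by
  by_contra! hlt
  obtain ⟨v, hv, hv0⟩ := hs
  refine (Multiset.sum_lt_sum (fun u hu => ?_) ⟨v, hv, hlt v hv hv0⟩).not_ge h
  rcases eq_or_ne u 0 with rfl | hu0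
  · exact h0.ge
  · exact (hlt u hu hu0).le

section InnerProductSpace

variable {E : Type*} [NormedAddCommGroup E] [InnerProductSpace ℂ E]

theorem exists_eq_smul_add_inner_eq_zero (w x : E) :
    ∃ (α : ℂ) (x' : E), x = α • w + x' ∧ ⟪w, x'⟫_ℂ = 0 ∧ ⟪w, x⟫_ℂ = α * (‖w‖ ^ 2 : ℝ) := by
  have hww : ⟪w, w⟫_ℂ = ((‖w‖ ^ 2 : ℝ) : ℂ) := by
    rw [inner_self_eq_norm_sq_to_K]; norm_cast
  rcases eq_or_ne w 0 with rfl | hw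
  · exact ⟨0, x, by simp, by simp, by simp⟩
  have hw2 : ((‖w‖ ^ 2 : ℝ) : ℂ) ≠ 0 := by exact_mod_cast (pow_pos (norm_pos_iff.mpr hw) 2).ne'
  have hα : ⟪w, x⟫_ℂ = ⟪w, x⟫_ℂ / (‖w‖ ^ 2 : ℝ) * (‖w‖ ^ 2 : ℝ) := (div_mul_cancel₀ _ hw2).symm
  refine ⟨⟪w, x⟫_ℂ / (‖w‖ ^ 2 : ℝ), x - (⟪w, x⟫_ℂ / (‖w‖ ^ 2 : ℝ)) • w, by abel, ?_, hα⟩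
  rw [inner_sub_right, inner_smul_right, hww, ← hα, sub_self]

theorem norm_inner_sq_le_of_mul_le {m : ℝ} (hm : 0 < m) {w a : E}
    (h : (m + ‖w‖ ^ 2) * (‖a‖ ^ 2 - m) ≤ ‖⟪w, a⟫_ℂ‖ ^ 2) (x : E) :
    ‖⟪a, x⟫_ℂ‖ ^ 2 ≤ m * ‖x‖ ^ 2 + ‖⟪w, x⟫_ℂ‖ ^ 2 := by
  obtain ⟨γ, r, rfl, hwr, hwa⟩ := exists_eq_smul_add_inner_eq_zero w a
  obtain ⟨α, x', rfl, hwx', hwx⟩ := exists_eq_smul_add_inner_eq_zero w x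
  have hrw : ⟪r, w⟫_ℂ = 0 := inner_eq_zero_symm.mp hwr
  have hnorm : ∀ (β : ℂ) (y : E), ⟪w, y⟫_ℂ = 0 → ‖β • w + y‖ ^ 2 = ‖β‖ ^ 2 * ‖w‖ ^ 2 + ‖y‖ ^ 2 :=
    fun β y hy => by
      have hperp : ⟪β • w, y⟫_ℂ = 0 := by rw [inner_smul_left, hy, mul_zero]
      rw [sq, sq, sq, norm_add_sq_eq_norm_sq_add_norm_sq_of_inner_eq_zero (𝕜 := ℂ) _ _ hperp,
        norm_smul]
      ring
  have hax : ⟪γ • w + r, α • w + x'⟫_ℂ = starRingEnd ℂ γ * ⟪w, α • w + x'⟫_ℂ + ⟪r, x'⟫_ℂ := by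
    rw [inner_add_left, inner_smul_left, inner_add_right (x := r), inner_smul_right, hrw, mul_zero,
      zero_add]
  have htri : ‖⟪γ • w + r, α • w + x'⟫_ℂ‖ ≤ ‖γ‖ * ‖w‖ ^ 2 * ‖α‖ + ‖r‖ * ‖x'‖ := by
    rw [hax, hwx]
    refine (norm_add_le _ _).trans (add_le_add (le_of_eq ?_) (norm_inner_le_norm r x'))
    rw [norm_mul, norm_mul, RCLike.norm_conj, Complex.norm_real,
      Real.norm_of_nonneg (by positivity)]
    ring
  have hwan : ‖⟪w, γ • w + r⟫_ℂ‖ = ‖γ‖ * ‖w‖ ^ 2 := by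
    rw [hwa, norm_mul, Complex.norm_real, Real.norm_of_nonneg (by positivity)]
  have hwxn : ‖⟪w, α • w + x'⟫_ℂ‖ = ‖w‖ ^ 2 * ‖α‖ := by
    rw [hwx, norm_mul, Complex.norm_real, Real.norm_of_nonneg (by positivity), mul_comm]
  rw [hnorm γ r hwr, hwan] at h
  rw [hnorm α x' hwx', hwxn]
  calc ‖⟪γ • w + r, α • w + x'⟫_ℂ‖ ^ 2 ≤ (‖γ‖ * ‖w‖ ^ 2 * ‖α‖ + ‖r‖ * ‖x'‖) ^ 2 :=
        pow_le_pow_left₀ (norm_nonneg _) htri 2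
    _ ≤ m * (‖w‖ ^ 2 * ‖α‖ ^ 2 + ‖x'‖ ^ 2) + (‖w‖ ^ 2 * ‖α‖) ^ 2 :=
        sq_le_of_weighted_cauchy_schwarz hm (by positivity) (by nlinarith)
    _ = m * (‖α‖ ^ 2 * ‖w‖ ^ 2 + ‖x'‖ ^ 2) + (‖w‖ ^ 2 * ‖α‖) ^ 2 := by ring

end InnerProductSpace

namespace Matrix

variable {n : Type*}

theorem vecMulVec_ofReal_smul_self (r : ℝ) (v : n → ℂ) :
    vecMulVec ((r : ℂ) • v) (star ((r : ℂ) • v)) = ((r ^ 2 : ℝ) : ℂ) • vecMulVec v (star v) := by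
  rw [star_smul, Complex.star_def, Complex.conj_ofReal, smul_vecMulVec, vecMulVec_smul, smul_smul,
    Complex.ofReal_pow, sq]

theorem vecMulVec_rotate_add {c s : ℝ} (h : c ^ 2 + s ^ 2 = 1) (v u : n → ℂ) :
    vecMulVec ((c : ℂ) • v + (s : ℂ) • u) (star ((c : ℂ) • v + (s : ℂ) • u)) +
        vecMulVec (-(s : ℂ) • v + (c : ℂ) • u) (star (-(s : ℂ) • v + (c : ℂ) • u)) =
      vecMulVec v (star v) + vecMulVec u (star u) := by
  have h' : (c : ℂ) ^ 2 + (s : ℂ) ^ 2 = 1 := by exact_mod_cast h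
  ext i j
  simp only [add_apply, vecMulVec_apply, Pi.add_apply, Pi.smul_apply, Pi.star_apply,
    smul_eq_mul, star_add, star_mul', star_neg, Complex.star_def, Complex.conj_ofReal]
  linear_combination (v i * (starRingEnd ℂ) (v j) + u i * (starRingEnd ℂ) (u j)) * h'

variable [Fintype n]

theorem trace_mul_vecMulVec_self {α : Type*} [CommSemiring α] [StarRing α]
    (A : Matrix n n α) (v : n → α) :
    trace (A * vecMulVec v (star v)) = star v ⬝ᵥ A *ᵥ v := by
  rw [mul_vecMulVec, trace_vecMulVec, dotProduct_comm]

theorem re_star_dotProduct_vecMulVec_self_mulVec (v x : n → ℂ) :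
    (star x ⬝ᵥ vecMulVec v (star v) *ᵥ x).re = Complex.normSq (star v ⬝ᵥ x) := by
  rw [vecMulVec_mulVec, op_smul_eq_smul, dotProduct_smul, smul_eq_mul, star_dotProduct x v,
    Complex.star_def, mul_comm, ← Complex.normSq_eq_conj_mul_self, Complex.ofReal_re]

theorem normSq_star_dotProduct_comm (u v : n → ℂ) :
    Complex.normSq (star u ⬝ᵥ v) = Complex.normSq (star v ⬝ᵥ u) := by
  rw [star_dotProduct, Complex.star_def, Complex.normSq_conj]

theorem re_trace_mul_multiset_sum_vecMulVec (A : Matrix n n ℂ) (s : Multiset (n → ℂ)) :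
    (trace (A * (s.map fun v => vecMulVec v (star v)).sum)).re =
      (s.map fun v => (star v ⬝ᵥ A *ᵥ v).re).sum := by
  induction s using Multiset.induction_on with
  | empty => simp
  | cons v s ih => simp [mul_add, trace_mul_vecMulVec_self, ih]

theorem posSemidef_of_re_star_dotProduct_mulVec_nonneg {A : Matrix n n ℂ} (hA : A.IsHermitian)
    (h : ∀ x, 0 ≤ (star x ⬝ᵥ A *ᵥ x).re) : A.PosSemidef :=
  .of_dotProduct_mulVec_nonneg hA fun x =>
    RCLike.nonneg_iff.mpr ⟨h x, hA.im_star_dotProduct_mulVec_self x⟩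

theorem exists_rotate_re_star_dotProduct_mulVec_eq_zero (A : Matrix n n ℂ) {v u : n → ℂ}
    (h : (star v ⬝ᵥ A *ᵥ v).re * (star u ⬝ᵥ A *ᵥ u).re ≤ 0) :
    ∃ c s : ℝ, c ^ 2 + s ^ 2 = 1 ∧
      (star ((c : ℂ) • v + (s : ℂ) • u) ⬝ᵥ A *ᵥ ((c : ℂ) • v + (s : ℂ) • u)).re = 0 := by
  set f : ℝ → ℝ := fun θ =>
    (star ((Real.cos θ : ℂ) • v + (Real.sin θ : ℂ) • u) ⬝ᵥ
      A *ᵥ ((Real.cos θ : ℂ) • v + (Real.sin θ : ℂ) • u)).re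
  have hf : Continuous f := by fun_prop
  have hzero : (0 : ℝ) ∈ Set.uIcc (f 0) (f (Real.pi / 2)) := by
    simp only [f, Real.cos_zero, Real.sin_zero, Real.cos_pi_div_two, Real.sin_pi_div_two,
      Complex.ofReal_one, Complex.ofReal_zero, one_smul, zero_smul, add_zero, zero_add]
    rcases mul_nonpos_iff.mp h with h | h
    · exact Set.mem_uIcc.mpr (Or.inr h.symm)
    · exact Set.mem_uIcc.mpr (Or.inl h)
  obtain ⟨θ, -, hθ⟩ := intermediate_value_uIcc hf.continuousOn hzero
  exact ⟨Real.cos θ, Real.sin θ, Real.cos_sq_add_sin_sq θ, hθ⟩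

theorem exists_isotropic_vecMulVec_add_multiset_sum (A : Matrix n n ℂ) {s : Multiset (n → ℂ)}
    (hs : s ≠ 0) (htr : (trace (A * (s.map fun v => vecMulVec v (star v)).sum)).re = 0) :
    ∃ p t, (star p ⬝ᵥ A *ᵥ p).re = 0 ∧ Multiset.card t < Multiset.card s ∧
      vecMulVec p (star p) + (t.map fun v => vecMulVec v (star v)).sum =
        (s.map fun v => vecMulVec v (star v)).sum := by
  classical
  set q : (n → ℂ) → ℝ := fun v => (star v ⬝ᵥ A *ᵥ v).re
  obtain ⟨p, hp⟩ := Multiset.exists_mem_of_ne_zero hs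
  by_cases hp0 : q p = 0
  · exact ⟨p, s.erase p, hp0, Multiset.card_erase_lt_of_mem hp,
      Multiset.sum_map_erase (f := fun v => vecMulVec v (star v)) hp⟩
  rw [re_trace_mul_multiset_sum_vecMulVec, ← Multiset.sum_map_erase hp] at htr
  -- `q p` and the sum of `q` over the other vectors cancel, so some other `q u` has the other sign
  obtain ⟨u, hu, hpu⟩ : ∃ u ∈ s.erase p, q p * q u ≤ 0 := by
    by_contra! hpos
    have : 0 ≤ q p * ((s.erase p).map q).sum := by
      rw [← Multiset.sum_map_mul_left]
      exact Multiset.sum_nonneg fun x hx => by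
        obtain ⟨u, hu, rfl⟩ := Multiset.mem_map.mp hx
        exact (hpos u hu).le
    exact hp0 (by nlinarith)
  obtain ⟨c, d, hcd, hq⟩ := exists_rotate_re_star_dotProduct_mulVec_eq_zero A hpu
  refine ⟨(c : ℂ) • p + (d : ℂ) • u, (-(d : ℂ) • p + (c : ℂ) • u) ::ₘ (s.erase p).erase u, hq,
    ?_, ?_⟩
  · rw [Multiset.card_cons, Multiset.card_erase_add_one hu]
    exact Multiset.card_erase_lt_of_mem hp
  · rw [Multiset.map_cons, Multiset.sum_cons, ← add_assoc, vecMulVec_rotate_add hcd, add_assoc,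
      Multiset.sum_map_erase (f := fun v => vecMulVec v (star v)) hu,
      Multiset.sum_map_erase (f := fun v => vecMulVec v (star v)) hp]

theorem exists_multiset_isotropic_of_re_trace_mul_multiset_sum_eq_zero (A : Matrix n n ℂ)
    (s : Multiset (n → ℂ))
    (htr : (trace (A * (s.map fun v => vecMulVec v (star v)).sum)).re = 0) :
    ∃ t : Multiset (n → ℂ), (t.map fun v => vecMulVec v (star v)).sum =
        (s.map fun v => vecMulVec v (star v)).sum ∧ ∀ v ∈ t, (star v ⬝ᵥ A *ᵥ v).re = 0 := by
  rcases eq_or_ne s 0 with rfl | hs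
  · exact ⟨0, rfl, by simp⟩
  obtain ⟨p, t, hp, -, hsum⟩ := exists_isotropic_vecMulVec_add_multiset_sum A hs htr
  rw [← hsum, mul_add, trace_add, Complex.add_re, trace_mul_vecMulVec_self, hp, zero_add] at htr
  obtain ⟨t', ht', hq⟩ := exists_multiset_isotropic_of_re_trace_mul_multiset_sum_eq_zero A t htr
  exact ⟨p ::ₘ t', by rw [Multiset.map_cons, Multiset.sum_cons, ht', hsum],
    Multiset.forall_mem_cons.mpr ⟨hp, hq⟩⟩
termination_by Multiset.card s
decreasing_by assumption

theorem PosSemidef.exists_multiset_isotropic {W : Matrix n n ℂ} (hW : W.PosSemidef)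
    (A : Matrix n n ℂ) (htr : (trace (A * W)).re = 0) :
    ∃ t : Multiset (n → ℂ), (t.map fun v => vecMulVec v (star v)).sum = W ∧
      ∀ v ∈ t, (star v ⬝ᵥ A *ᵥ v).re = 0 := by
  obtain ⟨m, v, rfl⟩ := posSemidef_iff_eq_sum_vecMulVec.mp hW
  have hsum : ∑ i, vecMulVec (v i) (star (v i)) =
      ((Finset.univ.val.map v).map fun v => vecMulVec v (star v)).sum := by
    rw [Multiset.map_map]; rfl
  rw [hsum] at htr ⊢
  exact exists_multiset_isotropic_of_re_trace_mul_multiset_sum_eq_zero A _ htr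

end Matrix

theorem nsq_eq_re_star_dotProduct {N : ℕ} (v : Fin N → ℂ) : nsq v = (star v ⬝ᵥ v).re := by
  simp only [nsq, dotProduct, Pi.star_apply, Complex.star_def,
    ← Complex.normSq_eq_conj_mul_self, Complex.re_sum, Complex.ofReal_re]

theorem nsq_ofReal_smul {N : ℕ} (r : ℝ) (v : Fin N → ℂ) : nsq ((r : ℂ) • v) = r ^ 2 * nsq v := by
  simp only [nsq, Pi.smul_apply, smul_eq_mul, Complex.normSq_mul, Complex.normSq_ofReal,
    Finset.mul_sum, sq]

theorem Matrix.PosSemidef.exists_multiset_re_eq_mul_nsq {N : ℕ} {W : Matrix (Fin N) (Fin N) ℂ}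
    (hW : W.PosSemidef) (R : Matrix (Fin N) (Fin N) ℂ) (ht : (trace W).re ≠ 0) :
    ∃ T : Multiset (Fin N → ℂ), (T.map fun v => vecMulVec v (star v)).sum = W ∧
      ∀ v ∈ T, (star v ⬝ᵥ R *ᵥ v).re = (trace (R * W)).re / (trace W).re * nsq v := by
  set μ := (trace (R * W)).re / (trace W).re
  obtain ⟨T, hTW, hT⟩ := hW.exists_multiset_isotropic (R - (μ : ℂ) • 1) (by
    rw [sub_mul, trace_sub, smul_mul, one_mul, trace_smul, Complex.sub_re, smul_eq_mul,
      Complex.re_ofReal_mul, div_mul_cancel₀ _ ht, sub_self])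
  refine ⟨T, hTW, fun v hv => ?_⟩
  have := hT v hv
  rwa [sub_mulVec, smul_mulVec, one_mulVec, dotProduct_sub, dotProduct_smul, Complex.sub_re,
    smul_eq_mul, Complex.re_ofReal_mul, ← nsq_eq_re_star_dotProduct, sub_eq_zero] at this

theorem Matrix.PosSemidef.exists_vec_nsq_eq_re_trace {N : ℕ} {W : Matrix (Fin N) (Fin N) ℂ}
    (hW : W.PosSemidef) (R : Matrix (Fin N) (Fin N) ℂ) (a : Fin N → ℂ) :
    ∃ w : Fin N → ℂ, nsq w = (trace W).re ∧
      (trace (R * vecMulVec w (star w))).re = (trace (R * W)).re ∧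
      (star a ⬝ᵥ W *ᵥ a).re ≤ (star a ⬝ᵥ vecMulVec w (star w) *ᵥ a).re := by
  rcases eq_or_ne W 0 with rfl | hW0
  · exact ⟨0, by simp [nsq], by simp, by simp⟩
  have ht : 0 < (trace W).re :=
    (RCLike.pos_iff.mp (hW.trace_nonneg.lt_of_ne' (mt hW.trace_eq_zero_iff.mp hW0))).1
  obtain ⟨T, hTW, hRT⟩ := hW.exists_multiset_re_eq_mul_nsq R ht.ne'
  set t := (trace W).re with ht_def
  have hnsq : (T.map nsq).sum = t := by
    rw [ht_def, ← hTW, ← Matrix.one_mul (T.map fun v => vecMulVec v (star v)).sum,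
      re_trace_mul_multiset_sum_vecMulVec]
    simp only [one_mulVec, nsq_eq_re_star_dotProduct]
  have hquad : (T.map fun v => Complex.normSq (star v ⬝ᵥ a)).sum = (star a ⬝ᵥ W *ᵥ a).re := by
    rw [← trace_mul_vecMulVec_self, trace_mul_comm, ← hTW, re_trace_mul_multiset_sum_vecMulVec]
    exact congrArg _ (Multiset.map_congr rfl fun v _ => by
      rw [re_star_dotProduct_vecMulVec_self_mulVec, normSq_star_dotProduct_comm])
  obtain ⟨v, hvT, hv0, hv⟩ : ∃ v ∈ T, v ≠ 0 ∧
      (star a ⬝ᵥ W *ᵥ a).re * nsq v ≤ t * Complex.normSq (star v ⬝ᵥ a) := by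
    refine Multiset.exists_mem_ne_zero_le_of_sum_le ?_ (by simp [nsq]) ?_
    · by_contra! hzero
      refine hW0 (hTW ▸ Multiset.sum_eq_zero fun x hx => ?_)
      obtain ⟨v, hv, rfl⟩ := Multiset.mem_map.mp hx
      simp [hzero v hv]
    · rw [Multiset.sum_map_mul_left, Multiset.sum_map_mul_left, hnsq, hquad, mul_comm]
  have hv_pos : 0 < nsq v := by
    rw [nsq_eq_re_star_dotProduct]
    exact (RCLike.pos_iff.mp (dotProduct_star_self_pos_iff.mpr hv0)).1
  have hr : Real.sqrt (t / nsq v) ^ 2 = t / nsq v := Real.sq_sqrt (div_pos ht hv_pos).le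
  refine ⟨(Real.sqrt (t / nsq v) : ℂ) • v, ?_, ?_, ?_⟩
  · rw [nsq_ofReal_smul, hr, div_mul_cancel₀ _ hv_pos.ne']
  · rw [vecMulVec_ofReal_smul_self, mul_smul_comm, trace_smul, smul_eq_mul,
      Complex.re_ofReal_mul, trace_mul_vecMulVec_self, hRT v hvT, hr]
    field_simp
  · rw [re_star_dotProduct_vecMulVec_self_mulVec, star_smul, Complex.star_def,
      Complex.conj_ofReal, smul_dotProduct, smul_eq_mul, Complex.normSq_mul,
      Complex.normSq_ofReal, ← sq, hr, div_mul_eq_mul_div, le_div_iff₀ hv_pos]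
    exact hv

theorem blk_posSemidef_iff {N : ℕ} (A : Matrix (Fin N) (Fin N) ℂ) (b : Fin N → ℂ) {c : ℝ}
    (hc : 0 < c) :
    (blk A b c).PosSemidef ↔ (A - ((c⁻¹ : ℝ) : ℂ) • vecMulVec b (star b)).PosSemidef := by
  have hc' : (0 : ℂ) < c := by exact_mod_cast hc
  have hD : (c : ℂ) • (1 : Matrix (Fin 1) (Fin 1) ℂ) = of fun _ _ => (c : ℂ) := by
    ext i j; simp [Subsingleton.elim i j]
  have hblk : blk A b c =
      fromBlocks A (replicateCol (Fin 1) b) (replicateCol (Fin 1) b)ᴴ ((c : ℂ) • 1) := by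
    rw [conjTranspose_replicateCol, hD]; rfl
  have hDpos : ((c : ℂ) • (1 : Matrix (Fin 1) (Fin 1) ℂ)).PosDef := PosDef.one.smul hc'
  let := hDpos.isUnit.invertible
  have hDinv : ((c : ℂ) • (1 : Matrix (Fin 1) (Fin 1) ℂ))⁻¹ = ((c⁻¹ : ℝ) : ℂ) • 1 :=
    inv_eq_left_inv (by rw [smul_mul_smul, one_mul, Complex.ofReal_inv, inv_mul_cancel₀ hc'.ne',
      one_smul])
  rw [hblk, PosDef.fromBlocks₂₂ A _ hDpos, hDinv]
  congr! 2
  ext i j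
  simp [Matrix.mul_apply, vecMulVec_apply]
  ring

theorem posSemidef_vecMulVec_sub_smul_one_sub_vecMulVec {N : ℕ} {y : ℝ} (hy : y < 0)
    {w a : Fin N → ℂ} (h : (nsq w - y) * (nsq a + y) ≤ (star a ⬝ᵥ vecMulVec w (star w) *ᵥ a).re) :
    (vecMulVec w (star w) - (y : ℂ) • 1 - vecMulVec a (star a)).PosSemidef := by
  have hnorm : ∀ v : Fin N → ℂ, ‖WithLp.toLp 2 v‖ ^ 2 = nsq v := fun v => by
    simp [EuclideanSpace.norm_sq_eq, nsq, Complex.sq_norm]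
  have hinner : ∀ u v : Fin N → ℂ, ‖⟪WithLp.toLp 2 u, WithLp.toLp 2 v⟫_ℂ‖ ^ 2 =
      Complex.normSq (star u ⬝ᵥ v) := fun u v => by
    rw [EuclideanSpace.inner_toLp_toLp, dotProduct_comm, Complex.sq_norm]
  have hH : (vecMulVec w (star w) - (y : ℂ) • 1 - vecMulVec a (star a)).IsHermitian :=
    ((posSemidef_vecMulVec_self_star w).isHermitian.sub
      (isHermitian_one.smul (by simp [IsSelfAdjoint, Complex.conj_ofReal]))).sub
      (posSemidef_vecMulVec_self_star a).isHermitian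
  refine posSemidef_of_re_star_dotProduct_mulVec_nonneg hH fun x => ?_
  have := norm_inner_sq_le_of_mul_le (neg_pos.mpr hy) (w := WithLp.toLp 2 w)
    (a := WithLp.toLp 2 a) (by
      rw [hnorm, hnorm, hinner, ← re_star_dotProduct_vecMulVec_self_mulVec]
      linarith) (WithLp.toLp 2 x)
  rw [hnorm, hinner, hinner] at this
  rw [sub_mulVec, sub_mulVec, dotProduct_sub, dotProduct_sub, Complex.sub_re, Complex.sub_re,
    smul_mulVec, one_mulVec, dotProduct_smul, smul_eq_mul, Complex.re_ofReal_mul,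
    ← nsq_eq_re_star_dotProduct, re_star_dotProduct_vecMulVec_self_mulVec,
    re_star_dotProduct_vecMulVec_self_mulVec]
  linarith

theorem stmt_7_general {N : ℕ} (ahat : Fin N → ℂ)
    (ε η₁ η₂ : ℝ)
    (Rhat : Matrix (Fin N) (Fin N) ℂ)
    (W : Matrix (Fin N) (Fin N) ℂ) (y₁ y₂ y₃ y₄ : ℝ)
    (hfeas : Feas ahat ε η₁ η₂ W y₁ y₂ y₃ y₄)
    (hy : y₁ + y₂ + y₃ < 0)
    (hpos : 0 < -y₄ - y₁ * (nsq ahat - ε))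
    (abar : Fin N → ℂ)
    (habar : abar = ((y₁ / Real.sqrt (-y₄ - y₁ * (nsq ahat - ε)) : ℝ) : ℂ) • ahat)
    (hcond : 0 ≤ (y₁ + y₂ + y₃) ^ 2 + (y₁ + y₂ + y₃) * (nsq abar - (Matrix.trace W).re) +
        (star abar ⬝ᵥ W.mulVec abar).re - nsq abar * (Matrix.trace W).re) :
    ∃ w : Fin N → ℂ,
      Feas ahat ε η₁ η₂ (Matrix.vecMulVec w (star w)) y₁ y₂ y₃ y₄ ∧
      (Matrix.trace (Rhat * Matrix.vecMulVec w (star w))).re = (Matrix.trace (Rhat * W)).re ∧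
      ((∀ (W' : Matrix (Fin N) (Fin N) ℂ) (y₁' y₂' y₃' y₄' : ℝ),
          Feas ahat ε η₁ η₂ W' y₁' y₂' y₃' y₄' →
          (Matrix.trace (Rhat * W)).re ≤ (Matrix.trace (Rhat * W')).re) →
        ∀ (W' : Matrix (Fin N) (Fin N) ℂ) (y₁' y₂' y₃' y₄' : ℝ),
          Feas ahat ε η₁ η₂ W' y₁' y₂' y₃' y₄' →
          (Matrix.trace (Rhat * Matrix.vecMulVec w (star w))).re ≤
            (Matrix.trace (Rhat * W')).re) := by
  obtain ⟨hW, hy₁, hy₂, hy₃, hlin, hy_nonpos, -⟩ := hfeas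
  obtain ⟨w, hnsq, htrace, hquad⟩ := hW.exists_vec_nsq_eq_re_trace Rhat abar
  have habar_outer : (((-y₄ - y₁ * (nsq ahat - ε))⁻¹ : ℝ) : ℂ) •
      vecMulVec ((y₁ : ℂ) • ahat) (star ((y₁ : ℂ) • ahat)) = vecMulVec abar (star abar) := by
    rw [habar, vecMulVec_ofReal_smul_self, vecMulVec_ofReal_smul_self, smul_smul,
      ← Complex.ofReal_mul, div_pow, Real.sq_sqrt hpos.le, inv_mul_eq_div]
  refine ⟨w, ⟨posSemidef_vecMulVec_self_star w, hy₁, hy₂, hy₃, hlin, hy_nonpos, ?_⟩, htrace,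
    fun hopt => htrace ▸ hopt⟩
  rw [blk_posSemidef_iff _ _ hpos, habar_outer]
  refine posSemidef_vecMulVec_sub_smul_one_sub_vecMulVec hy ?_
  rw [hnsq]
  linarith

/-- Theorem 2: if `(W, y₁, y₂, y₃, y₄)` is feasible for the tightened LMI relaxation,
`y = y₁+y₂+y₃ < 0`, `−y₄ − y₁(‖â‖² − ε) > 0`, `ā = y₁â/√(−y₄ − y₁(‖â‖² − ε))` and
`y² + y(‖ā‖² − tr W) + āᴴWā − ‖ā‖² tr W ≥ 0`, then there is `w` such that
`(wwᴴ, y₁, y₂, y₃, y₄)` is feasible with the same objective value `tr(R̂ W)`; in particular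
if `W` is optimal then the relaxation has a rank-one optimal solution. -/
theorem stmt_7 {N : ℕ} (hN : 1 ≤ N) (ahat : Fin N → ℂ) (ha : nsq ahat = N)
    (ε η₁ η₂ : ℝ) (hε0 : 0 < ε) (hεN : ε < N) (hη₁ : 0 ≤ η₁) (hη₂ : 0 ≤ η₂)
    (Rhat : Matrix (Fin N) (Fin N) ℂ) (hR : Rhat.PosSemidef)
    (W : Matrix (Fin N) (Fin N) ℂ) (y₁ y₂ y₃ y₄ : ℝ)
    (hfeas : Feas ahat ε η₁ η₂ W y₁ y₂ y₃ y₄)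
    (hy : y₁ + y₂ + y₃ < 0)
    (hpos : 0 < -y₄ - y₁ * (nsq ahat - ε))
    (abar : Fin N → ℂ)
    (habar : abar = ((y₁ / Real.sqrt (-y₄ - y₁ * (nsq ahat - ε)) : ℝ) : ℂ) • ahat)
    (hcond : 0 ≤ (y₁ + y₂ + y₃) ^ 2 + (y₁ + y₂ + y₃) * (nsq abar - (Matrix.trace W).re) +
        (star abar ⬝ᵥ W.mulVec abar).re - nsq abar * (Matrix.trace W).re) :
    ∃ w : Fin N → ℂ,
      Feas ahat ε η₁ η₂ (Matrix.vecMulVec w (star w)) y₁ y₂ y₃ y₄ ∧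
      (Matrix.trace (Rhat * Matrix.vecMulVec w (star w))).re = (Matrix.trace (Rhat * W)).re ∧
      ((∀ (W' : Matrix (Fin N) (Fin N) ℂ) (y₁' y₂' y₃' y₄' : ℝ),
          Feas ahat ε η₁ η₂ W' y₁' y₂' y₃' y₄' →
          (Matrix.trace (Rhat * W)).re ≤ (Matrix.trace (Rhat * W')).re) →
        ∀ (W' : Matrix (Fin N) (Fin N) ℂ) (y₁' y₂' y₃' y₄' : ℝ),
          Feas ahat ε η₁ η₂ W' y₁' y₂' y₃' y₄' →
          (Matrix.trace (Rhat * Matrix.vecMulVec w (star w))).re ≤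
            (Matrix.trace (Rhat * W')).re) :=
  stmt_7_general ahat ε η₁ η₂ Rhat W y₁ y₂ y₃ y₄ hfeas hy hpos abar habar hcond
end

section
/- (Rank-one matrix decomposition.) Suppose X is an N×N complex Hermitian positive semidefinite matrix of rank R ≥ 1, and A and B are given N×N Hermitian matrices. Then there exist vectors x₁, ..., x_R ∈ ℂ^N such that X = Σ_{r=1}^R x_r x_r^H and, for every r = 1, ..., R, x_r^H A x_r = tr(AX)/R and x_r^H B x_r = tr(BX)/R. -/
/-!
The spectral decomposition writes `X` as a sum of exactly `rank X` terms `y yᴴ`. A complex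
Givens rotation `(v, w) ↦ (cos θ • v + (sin θ * m) • w, -(sin θ * conj m) • v + cos θ • w)` with
`|m| = 1` preserves `v vᴴ + w wᴴ`, hence the sum of the values of every Hermitian form on the two
vectors, while the value of the first vector moves continuously from that of `v` (at `θ = 0`) to
that of `w` (at `θ = π/2`). So a term whose value lies above the average can be paired with one
below it and rotated until it takes the average value, and repeating this equalizes the form. Do
this first for `A`, then for `B`, choosing `m` so that `Re (m * vᴴ A w) = 0`: then both rotated
vectors keep the common `A`-value.
-/

open Matrix Finset Real
open scoped ComplexOrder

lemma exists_lt_and_exists_gt_of_sum_eq {ι : Type*} [Fintype ι] {f : ι → ℝ} {δ : ℝ}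
    (hsum : ∑ i, f i = Fintype.card ι * δ) {r : ι} (hr : f r ≠ δ) :
    (∃ i, δ < f i) ∧ ∃ j, f j < δ := by
  have hsum' : ∑ i, f i = ∑ _i : ι, δ := by simp [hsum]
  constructor
  · by_contra! h
    rcases hr.lt_or_gt with hlt | hgt
    · exact (Finset.sum_lt_sum (fun i _ => h i) ⟨r, mem_univ r, hlt⟩).ne hsum'
    · exact (h r).not_gt hgt
  · by_contra! h
    rcases hr.lt_or_gt with hlt | hgt
    · exact (h r).not_gt hlt
    · exact (Finset.sum_lt_sum (fun i _ => h i) ⟨r, mem_univ r, hgt⟩).ne' hsum'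

lemma sum_update_update_eq {ι α M : Type*} [Fintype ι] [DecidableEq ι] [AddCommMonoid M]
    (G : α → M) (y : ι → α) {i j : ι} (hij : i ≠ j) {x x' : α}
    (h : G x + G x' = G (y i) + G (y j)) :
    ∑ r, G (Function.update (Function.update y i x) j x' r) = ∑ r, G (y r) := by
  rw [← sum_add_sum_compl {i, j}, ← sum_add_sum_compl {i, j} (fun r => G (y r)),
    sum_pair hij, sum_pair hij, Function.update_self, Function.update_of_ne hij,
    Function.update_self, ← h]
  congr 1
  refine sum_congr rfl fun r hr => ?_
  simp only [mem_compl, mem_insert, mem_singleton, not_or] at hr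
  rw [Function.update_of_ne hr.2, Function.update_of_ne hr.1]

theorem exists_forall_eq_of_pair_step {ι α M : Type*} [Fintype ι] [AddCommMonoid M]
    (g : α → M) (f : α → ℝ) (S : Set α) (δ : ℝ)
    (hf : ∀ {x x' v w}, g x + g x' = g v + g w → f x + f x' = f v + f w)
    (step : ∀ v ∈ S, ∀ w ∈ S, f w ≤ δ → δ ≤ f v →
      ∃ x ∈ S, ∃ x' ∈ S, g x + g x' = g v + g w ∧ f x = δ)
    (y : ι → α) (hyS : ∀ r, y r ∈ S) (hsum : ∑ r, f (y r) = Fintype.card ι * δ) :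
    ∃ z : ι → α, (∀ r, z r ∈ S) ∧ ∑ r, g (z r) = ∑ r, g (y r) ∧ ∀ r, f (z r) = δ := by
  classical
  induction hk : #{r | f (y r) ≠ δ} using Nat.strong_induction_on generalizing y with
  | _ k ih =>
    by_cases hall : ∀ r, f (y r) = δ
    · exact ⟨y, hyS, rfl, hall⟩
    obtain ⟨r, hr⟩ := not_forall.mp hall
    obtain ⟨⟨i, hi⟩, ⟨j, hj⟩⟩ := exists_lt_and_exists_gt_of_sum_eq hsum hr
    have hij : i ≠ j := fun h => (hj.trans (h ▸ hi)).false
    obtain ⟨x, hxS, x', hx'S, hg, hfx⟩ := step _ (hyS i) _ (hyS j) hj.le hi.le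
    set y' := Function.update (Function.update y i x) j x'
    have hy'S : ∀ r, y' r ∈ S := by
      intro r
      rcases eq_or_ne r j with rfl | hrj
      · simpa [y'] using hx'S
      rcases eq_or_ne r i with rfl | hri
      · simpa [y', hrj] using hxS
      simpa [y', hrj, hri] using hyS r
    have hbad : #{r | f (y' r) ≠ δ} < k := by
      refine hk ▸ card_lt_card ((ssubset_iff_of_subset fun r hr => ?_).mpr ⟨i, ?_, ?_⟩)
      · rcases eq_or_ne r j with rfl | hrj
        · simpa using hj.ne
        rcases eq_or_ne r i with rfl | hri
        · simp [y', hrj, hfx] at hr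
        simpa [y', hrj, hri] using hr
      · simpa using hi.ne'
      · simp [y', hij, hfx]
    obtain ⟨z, hzS, hzg, hzf⟩ := ih _ hbad y' hy'S
      (by rw [sum_update_update_eq f y hij (hf hg), hsum]) rfl
    exact ⟨z, hzS, hzg.trans (sum_update_update_eq g y hij hg), hzf⟩

theorem exists_forall_eq_average_of_pair_step {ι α M : Type*} [Fintype ι] [AddCommMonoid M]
    (g : α → M) (f : α → ℝ) (S : Set α)
    (hf : ∀ {x x' v w}, g x + g x' = g v + g w → f x + f x' = f v + f w)
    (step : ∀ δ, ∀ v ∈ S, ∀ w ∈ S, f w ≤ δ → δ ≤ f v →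
      ∃ x ∈ S, ∃ x' ∈ S, g x + g x' = g v + g w ∧ f x = δ)
    (y : ι → α) (hyS : ∀ r, y r ∈ S) :
    ∃ z : ι → α, (∀ r, z r ∈ S) ∧ ∑ r, g (z r) = ∑ r, g (y r) ∧
      ∀ r, f (z r) = (∑ r, f (y r)) / Fintype.card ι := by
  refine exists_forall_eq_of_pair_step g f S _ hf (step _) y hyS ?_
  rcases isEmpty_or_nonempty ι with hι | hι
  · simp
  · field_simp

namespace Matrix

variable {n : Type*}

noncomputable def givensFst (v w : n → ℂ) (m : ℂ) (θ : ℝ) : n → ℂ :=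
  (cos θ : ℂ) • v + (sin θ * m) • w

noncomputable def givensSnd (v w : n → ℂ) (m : ℂ) (θ : ℝ) : n → ℂ :=
  (-(sin θ * starRingEnd ℂ m)) • v + (cos θ : ℂ) • w

lemma vecMulVec_givens_add {m : ℂ} (hm : Complex.normSq m = 1) (v w : n → ℂ) (θ : ℝ) :
    vecMulVec (givensFst v w m θ) (star (givensFst v w m θ))
      + vecMulVec (givensSnd v w m θ) (star (givensSnd v w m θ))
      = vecMulVec v (star v) + vecMulVec w (star w) := by
  have hm' : m * starRingEnd ℂ m = 1 := by rw [Complex.mul_conj, hm, Complex.ofReal_one]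
  have hθ : (cos θ : ℂ) ^ 2 + (sin θ : ℂ) ^ 2 = 1 := by
    exact_mod_cast cos_sq_add_sin_sq θ
  ext p q
  simp only [givensFst, givensSnd, Matrix.add_apply, vecMulVec_apply, Pi.add_apply,
    Pi.smul_apply, Pi.star_apply, smul_eq_mul, star_add, star_mul', Complex.star_def,
    map_neg, _root_.map_mul, Complex.conj_conj, Complex.conj_ofReal]
  linear_combination (v p * starRingEnd ℂ (v q) + w p * starRingEnd ℂ (w q))
    * (hθ + (sin θ : ℂ) ^ 2 * hm')

variable [Fintype n]

noncomputable def quadForm (C : Matrix n n ℂ) (v : n → ℂ) : ℝ :=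
  (star v ⬝ᵥ C *ᵥ v).re

lemma IsHermitian.ofReal_quadForm {C : Matrix n n ℂ} (hC : C.IsHermitian) (v : n → ℂ) :
    (quadForm C v : ℂ) = star v ⬝ᵥ C *ᵥ v :=
  Complex.ext rfl (hC.im_star_dotProduct_mulVec_self v).symm

lemma trace_mul_vecMulVec_star (C : Matrix n n ℂ) (v : n → ℂ) :
    trace (C * vecMulVec v (star v)) = star v ⬝ᵥ C *ᵥ v := by
  rw [mul_vecMulVec, trace_vecMulVec, dotProduct_comm]

lemma IsHermitian.trace_mul_eq_sum_quadForm {C : Matrix n n ℂ} (hC : C.IsHermitian)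
    {ι : Type*} [Fintype ι] (y : ι → n → ℂ) :
    trace (C * ∑ r, vecMulVec (y r) (star (y r))) = ((∑ r, quadForm C (y r) : ℝ) : ℂ) := by
  simp only [Matrix.mul_sum, trace_sum, trace_mul_vecMulVec_star, Complex.ofReal_sum,
    hC.ofReal_quadForm]

lemma quadForm_add_eq_of_vecMulVec (C : Matrix n n ℂ) {x x' v w : n → ℂ}
    (h : vecMulVec x (star x) + vecMulVec x' (star x')
      = vecMulVec v (star v) + vecMulVec w (star w)) :
    quadForm C x + quadForm C x' = quadForm C v + quadForm C w := by
  simpa only [Matrix.mul_add, trace_add, trace_mul_vecMulVec_star, Complex.add_re, quadForm] using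
    congr_arg (fun M => (trace (C * M)).re) h

lemma IsHermitian.quadForm_smul_add_smul {C : Matrix n n ℂ} (hC : C.IsHermitian)
    (v w : n → ℂ) (a b : ℂ) :
    quadForm C (a • v + b • w) = Complex.normSq a * quadForm C v
      + Complex.normSq b * quadForm C w + 2 * (starRingEnd ℂ a * b * (star v ⬝ᵥ C *ᵥ w)).re := by
  have hconj : star w ⬝ᵥ C *ᵥ v = starRingEnd ℂ (star v ⬝ᵥ C *ᵥ w) := by
    rw [starRingEnd_apply, star_dotProduct, star_mulVec, dotProduct_mulVec, hC.eq,
      dotProduct_comm]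
  simp only [quadForm, star_add, star_smul, mulVec_add, mulVec_smul, dotProduct_add,
    add_dotProduct, smul_dotProduct, dotProduct_smul, smul_eq_mul, hconj]
  simp only [RCLike.star_def, Complex.add_re, Complex.add_im, Complex.mul_re, Complex.mul_im,
    Complex.conj_re, Complex.conj_im, Complex.normSq_apply]
  ring

lemma IsHermitian.quadForm_givensFst {C : Matrix n n ℂ} (hC : C.IsHermitian) {m : ℂ}
    (hm : Complex.normSq m = 1) (v w : n → ℂ) (θ : ℝ) :
    quadForm C (givensFst v w m θ) = cos θ ^ 2 * quadForm C v + sin θ ^ 2 * quadForm C w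
      + 2 * (cos θ * sin θ) * (m * (star v ⬝ᵥ C *ᵥ w)).re := by
  have hcross : starRingEnd ℂ (cos θ : ℂ) * (sin θ * m) * (star v ⬝ᵥ C *ᵥ w)
      = ((cos θ * sin θ : ℝ) : ℂ) * (m * (star v ⬝ᵥ C *ᵥ w)) := by
    rw [Complex.conj_ofReal]; push_cast; ring
  rw [givensFst, hC.quadForm_smul_add_smul, hcross, Complex.re_ofReal_mul, Complex.normSq_mul,
    Complex.normSq_ofReal, Complex.normSq_ofReal, hm]
  ring

lemma IsHermitian.quadForm_givensSnd {C : Matrix n n ℂ} (hC : C.IsHermitian) {m : ℂ}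
    (hm : Complex.normSq m = 1) (v w : n → ℂ) (θ : ℝ) :
    quadForm C (givensSnd v w m θ) = sin θ ^ 2 * quadForm C v + cos θ ^ 2 * quadForm C w
      - 2 * (cos θ * sin θ) * (m * (star v ⬝ᵥ C *ᵥ w)).re := by
  have hcross : starRingEnd ℂ (-(sin θ * starRingEnd ℂ m)) * (cos θ : ℂ)
      * (star v ⬝ᵥ C *ᵥ w) = ((-(cos θ * sin θ) : ℝ) : ℂ) * (m * (star v ⬝ᵥ C *ᵥ w)) := by
    simp only [map_neg, _root_.map_mul, Complex.conj_conj, Complex.conj_ofReal]; push_cast; ring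
  rw [givensSnd, hC.quadForm_smul_add_smul, hcross, Complex.re_ofReal_mul, Complex.normSq_neg,
    Complex.normSq_mul, Complex.normSq_conj, Complex.normSq_ofReal, Complex.normSq_ofReal, hm]
  ring

lemma IsHermitian.exists_quadForm_givensFst_eq {C : Matrix n n ℂ} (hC : C.IsHermitian) {m : ℂ}
    (hm : Complex.normSq m = 1) {v w : n → ℂ} {δ : ℝ} (hw : quadForm C w ≤ δ)
    (hv : δ ≤ quadForm C v) : ∃ θ, quadForm C (givensFst v w m θ) = δ := by
  have hcont : Continuous fun θ => quadForm C (givensFst v w m θ) := by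
    simp_rw [hC.quadForm_givensFst hm]
    fun_prop
  have hends : δ ∈ Set.Icc (quadForm C (givensFst v w m (π / 2)))
      (quadForm C (givensFst v w m 0)) := by
    simpa [hC.quadForm_givensFst hm] using ⟨hw, hv⟩
  obtain ⟨θ, -, hθ⟩ := intermediate_value_Icc' pi_div_two_pos.le hcont.continuousOn hends
  exact ⟨θ, hθ⟩

lemma _root_.Complex.exists_normSq_eq_one_re_mul_eq_zero (c : ℂ) :
    ∃ m : ℂ, Complex.normSq m = 1 ∧ (m * c).re = 0 := by
  refine ⟨Complex.I * Complex.exp (-(c.arg : ℂ) * Complex.I), ?_, ?_⟩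
  · rw [Complex.normSq_eq_norm_sq, norm_mul, Complex.norm_I, ← Complex.ofReal_neg,
      Complex.norm_exp_ofReal_mul_I]
    norm_num
  · have hmc : Complex.I * Complex.exp (-(c.arg : ℂ) * Complex.I) * c = ‖c‖ * Complex.I :=
      calc _ = Complex.I * Complex.exp (-(c.arg : ℂ) * Complex.I)
            * (‖c‖ * Complex.exp (c.arg * Complex.I)) := by rw [Complex.norm_mul_exp_arg_mul_I]
        _ = ‖c‖ * Complex.I * Complex.exp (-(c.arg : ℂ) * Complex.I + c.arg * Complex.I) := by
            rw [Complex.exp_add]; ring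
        _ = ‖c‖ * Complex.I := by simp
    rw [hmc, Complex.re_ofReal_mul, Complex.I_re, mul_zero]

lemma IsHermitian.quadForm_givens_eq_of_re_mul_eq_zero {C : Matrix n n ℂ} (hC : C.IsHermitian)
    {m : ℂ} (hm : Complex.normSq m = 1) {v w : n → ℂ} {δ : ℝ} (hv : quadForm C v = δ)
    (hw : quadForm C w = δ) (hcross : (m * (star v ⬝ᵥ C *ᵥ w)).re = 0) (θ : ℝ) :
    quadForm C (givensFst v w m θ) = δ ∧ quadForm C (givensSnd v w m θ) = δ := by
  rw [hC.quadForm_givensFst hm, hC.quadForm_givensSnd hm, hv, hw, hcross]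
  constructor <;> linear_combination δ * cos_sq_add_sin_sq θ

lemma IsHermitian.exists_sum_vecMulVec_eq_and_quadForm_eq_average {C : Matrix n n ℂ}
    (hC : C.IsHermitian) {ι : Type*} [Fintype ι] (y : ι → n → ℂ) :
    ∃ z : ι → n → ℂ, ∑ r, vecMulVec (z r) (star (z r)) = ∑ r, vecMulVec (y r) (star (y r)) ∧
      ∀ r, quadForm C (z r) = (∑ r, quadForm C (y r)) / Fintype.card ι := by
  obtain ⟨z, -, hz⟩ := exists_forall_eq_average_of_pair_step (fun v => vecMulVec v (star v))
    (quadForm C) Set.univ (quadForm_add_eq_of_vecMulVec C)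
    (fun δ v _ w _ hw hv => by
      obtain ⟨θ, hθ⟩ := hC.exists_quadForm_givensFst_eq (m := 1) (by simp) hw hv
      exact ⟨_, trivial, _, trivial, vecMulVec_givens_add (by simp) v w θ, hθ⟩)
    y (fun _ => trivial)
  exact ⟨z, hz⟩

lemma IsHermitian.exists_sum_vecMulVec_eq_and_quadForm_eq_average_of_quadForm_eq
    {A B : Matrix n n ℂ} (hA : A.IsHermitian) (hB : B.IsHermitian) {ι : Type*} [Fintype ι]
    (y : ι → n → ℂ) {δ : ℝ} (hyA : ∀ r, quadForm A (y r) = δ) :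
    ∃ z : ι → n → ℂ, ∑ r, vecMulVec (z r) (star (z r)) = ∑ r, vecMulVec (y r) (star (y r)) ∧
      ∀ r, quadForm A (z r) = δ ∧ quadForm B (z r) = (∑ r, quadForm B (y r)) / Fintype.card ι := by
  obtain ⟨z, hzA, hz⟩ := exists_forall_eq_average_of_pair_step (fun v => vecMulVec v (star v))
    (quadForm B) {v | quadForm A v = δ} (quadForm_add_eq_of_vecMulVec B)
    (fun δB v hvA w hwA hw hv => by
      obtain ⟨m, hm, hmA⟩ := Complex.exists_normSq_eq_one_re_mul_eq_zero (star v ⬝ᵥ A *ᵥ w)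
      obtain ⟨θ, hθ⟩ := hB.exists_quadForm_givensFst_eq hm hw hv
      obtain ⟨hxA, hx'A⟩ := hA.quadForm_givens_eq_of_re_mul_eq_zero hm hvA hwA hmA θ
      exact ⟨_, hxA, _, hx'A, vecMulVec_givens_add hm v w θ, hθ⟩)
    y hyA
  exact ⟨z, hz.1, fun r => ⟨hzA r, hz.2 r⟩⟩

lemma IsHermitian.star_dotProduct_mulVec_eq_trace_mul_div {C X : Matrix n n ℂ}
    (hC : C.IsHermitian) {ι : Type*} [Fintype ι] {z : ι → n → ℂ}
    (hX : X = ∑ r, vecMulVec (z r) (star (z r))) {δ : ℝ} (hz : ∀ r, quadForm C (z r) = δ)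
    (r : ι) : star (z r) ⬝ᵥ C *ᵥ z r = trace (C * X) / Fintype.card ι := by
  have hcard : (Fintype.card ι : ℂ) ≠ 0 :=
    Nat.cast_ne_zero.mpr (Fintype.card_pos_iff.mpr ⟨r⟩).ne'
  rw [hX, hC.trace_mul_eq_sum_quadForm, ← hC.ofReal_quadForm, sum_congr rfl fun s _ => hz s,
    hz r, sum_const, card_univ, nsmul_eq_mul]
  push_cast
  field_simp

section Spectral

variable {𝕜 : Type*} [RCLike 𝕜] [DecidableEq n]

lemma IsHermitian.eq_sum_eigenvalues_smul_vecMulVec {X : Matrix n n 𝕜} (hX : X.IsHermitian) :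
    X = ∑ i, (hX.eigenvalues i : 𝕜) •
      vecMulVec (hX.eigenvectorBasis i) (star ⇑(hX.eigenvectorBasis i)) := by
  conv_lhs => rw [hX.spectral_theorem, Unitary.conjStarAlgAut_apply]
  ext p q
  simp only [mul_apply, eigenvectorUnitary_apply, diagonal_apply, Function.comp_apply, mul_ite,
    mul_zero, Finset.sum_ite_eq', Finset.mem_univ, if_true, star_apply, RCLike.star_def, sum_apply,
    smul_apply, vecMulVec_apply, Pi.star_apply, smul_eq_mul]
  exact Finset.sum_congr rfl fun _ _ => by ring

lemma PosSemidef.exists_eq_sum_vecMulVec_of_rank_eq {X : Matrix n n 𝕜} (hX : X.PosSemidef)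
    {R : ℕ} (hR : X.rank = R) : ∃ y : Fin R → n → 𝕜, X = ∑ r, vecMulVec (y r) (star (y r)) := by
  set v : n → n → 𝕜 := fun i =>
    (√(hX.isHermitian.eigenvalues i) : 𝕜) • ⇑(hX.isHermitian.eigenvectorBasis i)
  have hv : ∀ i, vecMulVec (v i) (star (v i)) = (hX.isHermitian.eigenvalues i : 𝕜) •
      vecMulVec (hX.isHermitian.eigenvectorBasis i)
        (star ⇑(hX.isHermitian.eigenvectorBasis i)) := by
    intro i
    rw [star_smul, RCLike.star_def, RCLike.conj_ofReal, smul_vecMulVec, vecMulVec_smul, smul_smul,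
      ← RCLike.ofReal_mul, mul_self_sqrt (hX.eigenvalues_nonneg i)]
  have hcard : Fintype.card {i // hX.isHermitian.eigenvalues i ≠ 0} = R :=
    hX.isHermitian.rank_eq_card_non_zero_eigs ▸ hR
  refine ⟨fun r => v ((Fintype.equivFinOfCardEq hcard).symm r), ?_⟩
  calc X = ∑ i, vecMulVec (v i) (star (v i)) := by
        simp_rw [hv]; exact hX.isHermitian.eq_sum_eigenvalues_smul_vecMulVec
    _ = ∑ i : {i // hX.isHermitian.eigenvalues i ≠ 0}, vecMulVec (v i) (star (v i)) := by
        rw [← Fintype.sum_subtype_add_sum_subtype (fun i => hX.isHermitian.eigenvalues i ≠ 0),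
          add_eq_left]
        exact Finset.sum_eq_zero fun i _ => by rw [hv, not_not.mp i.2]; simp
    _ = _ := (Equiv.sum_comp (Fintype.equivFinOfCardEq hcard).symm
        (fun i => vecMulVec (v i) (star (v i)))).symm

end Spectral

end Matrix

theorem stmt_9_general {N : ℕ} (X A B : Matrix (Fin N) (Fin N) ℂ)
    (hX : X.PosSemidef) (hA : A.IsHermitian) (hB : B.IsHermitian)
    (R : ℕ) (hR : X.rank = R) :
    ∃ x : Fin R → (Fin N → ℂ),
      X = ∑ r : Fin R, Matrix.vecMulVec (x r) (star (x r)) ∧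
      ∀ r : Fin R,
        star (x r) ⬝ᵥ A.mulVec (x r) = Matrix.trace (A * X) / (R : ℂ) ∧
        star (x r) ⬝ᵥ B.mulVec (x r) = Matrix.trace (B * X) / (R : ℂ) := by
  obtain ⟨y, hXy⟩ := hX.exists_eq_sum_vecMulVec_of_rank_eq hR
  obtain ⟨y₁, hy₁, hy₁A⟩ := hA.exists_sum_vecMulVec_eq_and_quadForm_eq_average y
  obtain ⟨z, hz, hzAB⟩ :=
    hA.exists_sum_vecMulVec_eq_and_quadForm_eq_average_of_quadForm_eq hB y₁ hy₁A
  have hXz : X = ∑ r, vecMulVec (z r) (star (z r)) := by rw [hXy, ← hy₁, ← hz]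
  refine ⟨z, hXz, fun r => ⟨?_, ?_⟩⟩
  · simpa using hA.star_dotProduct_mulVec_eq_trace_mul_div hXz (fun s => (hzAB s).1) r
  · simpa using hB.star_dotProduct_mulVec_eq_trace_mul_div hXz (fun s => (hzAB s).2) r

/-- Rank-one matrix decomposition (Huang–Zhang): if `X ⪰ 0` has rank `R ≥ 1` and `A`, `B`
are Hermitian, there are vectors `x₁, …, x_R` with `X = Σ x_r x_rᴴ` and
`x_rᴴ A x_r = tr(AX)/R`, `x_rᴴ B x_r = tr(BX)/R` for every `r`. -/
theorem stmt_9 {N : ℕ} (X A B : Matrix (Fin N) (Fin N) ℂ)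
    (hX : X.PosSemidef) (hA : A.IsHermitian) (hB : B.IsHermitian)
    (R : ℕ) (hR : X.rank = R) (hR1 : 1 ≤ R) :
    ∃ x : Fin R → (Fin N → ℂ),
      X = ∑ r : Fin R, Matrix.vecMulVec (x r) (star (x r)) ∧
      ∀ r : Fin R,
        star (x r) ⬝ᵥ A.mulVec (x r) = Matrix.trace (A * X) / (R : ℂ) ∧
        star (x r) ⬝ᵥ B.mulVec (x r) = Matrix.trace (B * X) / (R : ℂ) :=
  stmt_9_general X A B hX hA hB R hR
end

section
/- Let a ∈ ℂ^N be nonzero and w ∈ ℂ^N. Then w w^H ⪰ a a^H if and only if there exists λ ∈ ℂ with |λ| ≥ 1 such that w = λ a. -/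
open Matrix
open scoped ComplexOrder

/-!
Since `xᴴ (v vᴴ) x = |vᴴ x|²`, the matrix `w wᴴ - a aᴴ` is positive semidefinite exactly when
`|aᴴ x| ≤ |wᴴ x|` for every `x`. In particular `aᴴ x = 0` whenever `wᴴ x = 0`; applied to the
component `x = a - c w` of `a` orthogonal to `w` this forces `a = c w`, and testing at `x = w`
gives `|c| ≤ 1`, so `w = c⁻¹ a`.
-/

section

variable {𝕜 n : Type*} [RCLike 𝕜] [Fintype n]

theorem star_dotProduct_vecMulVec_self_star_mulVec (v x : n → 𝕜) :
    star x ⬝ᵥ (vecMulVec v (star v) *ᵥ x) = (‖star v ⬝ᵥ x‖ ^ 2 : ℝ) := by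
  rw [vecMulVec_mulVec, op_smul_eq_smul, dotProduct_smul, smul_eq_mul, star_dotProduct x v,
    RCLike.ofReal_pow]
  exact RCLike.mul_conj _

theorem posSemidef_vecMulVec_sub_vecMulVec_iff (a w : n → 𝕜) :
    (vecMulVec w (star w) - vecMulVec a (star a)).PosSemidef ↔
      ∀ x, ‖star a ⬝ᵥ x‖ ≤ ‖star w ⬝ᵥ x‖ := by
  rw [posSemidef_iff_dotProduct_mulVec]
  simp only [(posSemidef_vecMulVec_self_star w).isHermitian.sub
    (posSemidef_vecMulVec_self_star a).isHermitian, true_and, sub_mulVec, dotProduct_sub,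
    star_dotProduct_vecMulVec_self_star_mulVec, ← RCLike.ofReal_sub, RCLike.ofReal_nonneg,
    sub_nonneg]
  exact forall_congr' fun x => sq_le_sq₀ (norm_nonneg _) (norm_nonneg _)

theorem star_smul_dotProduct (c : 𝕜) (v x : n → 𝕜) :
    star (c • v) ⬝ᵥ x = star c * (star v ⬝ᵥ x) := by
  rw [star_smul, smul_dotProduct, smul_eq_mul]

theorem eq_smul_of_forall_dotProduct_eq_zero_imp {a w : n → 𝕜}
    (h : ∀ x, star w ⬝ᵥ x = 0 → star a ⬝ᵥ x = 0) :
    a = ((star w ⬝ᵥ a) / (star w ⬝ᵥ w)) • w := by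
  set c := (star w ⬝ᵥ a) / (star w ⬝ᵥ w)
  have hwx : star w ⬝ᵥ (a - c • w) = 0 := by
    rw [dotProduct_sub, dotProduct_smul, smul_eq_mul, div_mul_cancel_of_imp, sub_self]
    intro hww
    rw [dotProduct_star_self_eq_zero.mp hww, star_zero, zero_dotProduct]
  have hxx : star (a - c • w) ⬝ᵥ (a - c • w) = 0 := by
    rw [star_sub, sub_dotProduct, star_smul_dotProduct, h _ hwx, hwx, mul_zero, sub_zero]
  exact sub_eq_zero.mp (dotProduct_star_self_eq_zero.mp hxx)

theorem exists_eq_smul_of_forall_norm_dotProduct_le {a w : n → 𝕜}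
    (h : ∀ x, ‖star a ⬝ᵥ x‖ ≤ ‖star w ⬝ᵥ x‖) : ∃ c : 𝕜, ‖c‖ ≤ 1 ∧ a = c • w := by
  have haw := eq_smul_of_forall_dotProduct_eq_zero_imp fun x hx =>
    norm_le_zero_iff.mp ((h x).trans_eq (by rw [hx, norm_zero]))
  refine ⟨_, ?_, haw⟩
  rcases eq_or_ne w 0 with rfl | hw
  · simp
  have hww : 0 < ‖star w ⬝ᵥ w‖ := norm_pos_iff.mpr (dotProduct_star_self_eq_zero.not.mpr hw)
  have hcw := h w
  rw [haw, star_smul_dotProduct, norm_mul, norm_star] at hcw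
  exact (mul_le_iff_le_one_left hww).mp hcw

theorem forall_norm_dotProduct_le_iff {a w : n → 𝕜} (ha : a ≠ 0) :
    (∀ x, ‖star a ⬝ᵥ x‖ ≤ ‖star w ⬝ᵥ x‖) ↔ ∃ l : 𝕜, 1 ≤ ‖l‖ ∧ w = l • a := by
  constructor
  · intro h
    obtain ⟨c, hc, rfl⟩ := exists_eq_smul_of_forall_norm_dotProduct_le h
    have hc0 : c ≠ 0 := by rintro rfl; exact ha (zero_smul _ _)
    refine ⟨c⁻¹, ?_, (inv_smul_smul₀ hc0 w).symm⟩
    rw [norm_inv]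
    exact one_le_inv₀ (norm_pos_iff.mpr hc0) |>.mpr hc
  · rintro ⟨l, hl, rfl⟩ x
    rw [star_smul_dotProduct, norm_mul, norm_star]
    exact le_mul_of_one_le_left (norm_nonneg _) hl

end

/-- For nonzero `a`, one has `wwᴴ ⪰ aaᴴ` iff `w = λa` for some `λ ∈ ℂ` with `|λ| ≥ 1`. -/
theorem stmt_11 {N : ℕ} (a w : Fin N → ℂ) (ha : a ≠ 0) :
    (Matrix.vecMulVec w (star w) - Matrix.vecMulVec a (star a)).PosSemidef ↔
      ∃ l : ℂ, 1 ≤ ‖l‖ ∧ w = l • a :=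
  (posSemidef_vecMulVec_sub_vecMulVec_iff a w).trans (forall_norm_dotProduct_le_iff ha)
end

section
/- (LMI representation of the sum of K largest eigenvalues.) Let W be an N×N complex Hermitian matrix, let 1 ≤ K ≤ N, and let t ∈ ℝ. Let S_K(W) = λ₁(W) + ... + λ_K(W) be the sum of the K largest eigenvalues of W. Then S_K(W) ≤ t if and only if there exist an N×N Hermitian matrix Z and a real number s such that t − K s − tr(Z) ≥ 0, Z − W + s I ⪰ 0, and Z ⪰ 0. -/
/-!
Conjugating by the eigenvector unitary of `W` preserves traces and positive semidefiniteness,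
so the LMI is feasible iff its diagonal version is, i.e. iff there is a real vector `z ≥ 0` with
`z ≥ λ(W) - s` and `∑ z ≤ t - K s` (the diagonal of a PSD matrix is nonnegative; conversely take
`Z` diagonal). For such `z` and any `K`-element set `T`, `∑_{i ∈ T} λᵢ ≤ ∑_{i ∈ T} (zᵢ + s) ≤ ∑ z + K s`.
Equality is attained for the top `K` eigenvalues with `s = λ_K` and `z = (λ - s)⁺`.
-/

open Matrix
open scoped ComplexOrder

/-- The eigenvalues of a Hermitian matrix listed in decreasing order:
`eigDesc hA 0 ≥ eigDesc hA 1 ≥ … ≥ eigDesc hA (N-1)`. -/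
noncomputable def eigDesc {N : ℕ} {A : Matrix (Fin N) (Fin N) ℂ} (hA : A.IsHermitian)
    (i : Fin N) : ℝ :=
  hA.eigenvalues (Tuple.sort hA.eigenvalues i.rev)

namespace Finset

variable {ι : Type*} [Fintype ι] {μ z : ι → ℝ} {s : ℝ}

theorem sum_le_sum_add_card_mul (T : Finset ι) (hz₀ : 0 ≤ z) (hz : ∀ i, μ i - s ≤ z i) :
    ∑ i ∈ T, μ i ≤ ∑ i, z i + #T * s :=
  calc ∑ i ∈ T, μ i ≤ ∑ i ∈ T, (z i + s) := sum_le_sum fun i _ => by linarith [hz i]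
    _ = ∑ i ∈ T, z i + #T * s := by rw [sum_add_distrib, sum_const, nsmul_eq_mul]
    _ ≤ ∑ i, z i + #T * s := by gcongr ?_ + _; exact sum_le_univ_sum_of_nonneg hz₀

theorem sum_max_sub_zero_add_card_mul (T : Finset ι) (hle : ∀ i ∈ T, s ≤ μ i)
    (hge : ∀ i ∉ T, μ i ≤ s) : ∑ i, max (μ i - s) 0 + #T * s = ∑ i ∈ T, μ i := by
  have hsupp : ∑ i, max (μ i - s) 0 = ∑ i ∈ T, (μ i - s) := by
    rw [← sum_subset T.subset_univ fun i _ hi => max_eq_right (by linarith [hge i hi])]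
    exact sum_congr rfl fun i hi => max_eq_left (by linarith [hle i hi])
  rw [hsupp, sum_sub_distrib, sum_const, nsmul_eq_mul]
  ring

theorem sum_le_iff_exists_threshold (T : Finset ι) (hT : T.Nonempty)
    (htop : ∀ i ∈ T, ∀ j ∉ T, μ j ≤ μ i) (t : ℝ) :
    ∑ i ∈ T, μ i ≤ t ↔
      ∃ s : ℝ, ∃ z : ι → ℝ, 0 ≤ z ∧ (∀ i, μ i - s ≤ z i) ∧ ∑ i, z i ≤ t - #T * s := by
  constructor
  · intro ht
    set s := T.inf' hT μ
    refine ⟨s, fun i => max (μ i - s) 0, fun i => le_max_right _ _, fun i => le_max_left _ _, ?_⟩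
    have := T.sum_max_sub_zero_add_card_mul (fun i hi => T.inf'_le μ hi)
      fun j hj => (T.le_inf'_iff hT μ).2 fun i hi => htop i hi j hj
    linarith
  · rintro ⟨s, z, hz₀, hz, hsum⟩
    linarith [T.sum_le_sum_add_card_mul hz₀ hz]

end Finset

namespace Matrix

variable {n : Type*} [Fintype n] [DecidableEq n]

section Unitary

variable {R : Type*} [CommRing R] [StarRing R] (u : unitary (Matrix n n R))

theorem trace_conjStarAlgAut (X : Matrix n n R) :
    (Unitary.conjStarAlgAut R _ u X).trace = X.trace := by
  rw [Unitary.conjStarAlgAut_apply, trace_mul_cycle, Unitary.coe_star_mul_self, one_mul]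

theorem posSemidef_conjStarAlgAut_iff [PartialOrder R] {X : Matrix n n R} :
    (Unitary.conjStarAlgAut R _ u X).PosSemidef ↔ X.PosSemidef :=
  Unitary.isUnit_coe.posSemidef_star_right_conjugate_iff

end Unitary

variable {𝕜 : Type*} [RCLike 𝕜]

theorem exists_posSemidef_sub_diagonal_iff (d : n → ℝ) (c : ℝ) :
    (∃ Z : Matrix n n 𝕜, Z.PosSemidef ∧ (Z - diagonal (RCLike.ofReal ∘ d)).PosSemidef ∧
        RCLike.re Z.trace ≤ c) ↔
      ∃ z : n → ℝ, 0 ≤ z ∧ (∀ i, d i ≤ z i) ∧ ∑ i, z i ≤ c := by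
  constructor
  · rintro ⟨Z, hZ, hZd, htr⟩
    refine ⟨fun i => RCLike.re (Z i i), fun i => (RCLike.nonneg_iff.1 hZ.diag_nonneg).1,
      fun i => ?_, by simpa [trace] using htr⟩
    simpa using (RCLike.nonneg_iff.1 (hZd.diag_nonneg (i := i))).1
  · rintro ⟨z, hz₀, hz, hsum⟩
    refine ⟨diagonal (RCLike.ofReal ∘ z), by simpa [Pi.le_def] using hz₀, ?_,
      by simpa [trace] using hsum⟩
    rw [diagonal_sub, posSemidef_diagonal_iff]
    intro i
    simpa using hz i

theorem IsHermitian.exists_posSemidef_sub_add_smul_one_iff {W : Matrix n n 𝕜}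
    (hW : W.IsHermitian) (s c : ℝ) :
    (∃ Z : Matrix n n 𝕜, Z.PosSemidef ∧ (Z - W + (s : 𝕜) • 1).PosSemidef ∧
        RCLike.re Z.trace ≤ c) ↔
      ∃ z : n → ℝ, 0 ≤ z ∧ (∀ i, hW.eigenvalues i - s ≤ z i) ∧ ∑ i, z i ≤ c := by
  let φ := Unitary.conjStarAlgAut 𝕜 (Matrix n n 𝕜) hW.eigenvectorUnitary
  have hshift :
      W - (s : 𝕜) • 1 = φ (diagonal (RCLike.ofReal ∘ (hW.eigenvalues - fun _ => s))) := by
    conv_lhs => rw [hW.spectral_theorem, ← map_one φ, ← map_smul, ← map_sub]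
    rw [smul_one_eq_diagonal, diagonal_sub]
    congr 2
    ext i
    simp
  simp only [sub_add, hshift]
  refine (EquivLike.surjective φ).exists.trans ?_
  simp only [← map_sub, φ, posSemidef_conjStarAlgAut_iff, trace_conjStarAlgAut]
  exact exists_posSemidef_sub_diagonal_iff _ c

end Matrix

open Finset

theorem eigDesc_antitone {N : ℕ} {A : Matrix (Fin N) (Fin N) ℂ} (hA : A.IsHermitian) :
    Antitone (eigDesc hA) := fun _ _ hij =>
  Tuple.monotone_sort hA.eigenvalues (Fin.rev_le_rev.mpr hij)

theorem sum_eigDesc_le_iff {N K : ℕ} {A : Matrix (Fin N) (Fin N) ℂ} (hA : A.IsHermitian)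
    (hK1 : 1 ≤ K) (hKN : K ≤ N) (t : ℝ) :
    ∑ i : Fin K, eigDesc hA (Fin.castLE hKN i) ≤ t ↔
      ∃ s : ℝ, ∃ z : Fin N → ℝ, 0 ≤ z ∧ (∀ i, hA.eigenvalues i - s ≤ z i) ∧
        ∑ i, z i ≤ t - K * s := by
  set σ : Equiv.Perm (Fin N) := Fin.revPerm.trans (Tuple.sort hA.eigenvalues)
  have hσ : ∀ i, hA.eigenvalues (σ i) = eigDesc hA i := fun _ => rfl
  set T := univ.map ((Fin.castLEEmb hKN).trans σ.toEmbedding)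
  have hmem : ∀ j, j ∈ T ↔ (σ.symm j : ℕ) < K := by
    intro j
    simp only [T, mem_map, mem_univ, true_and, Function.Embedding.trans_apply,
      Fin.coe_castLEEmb, Equiv.toEmbedding_apply]
    constructor
    · rintro ⟨a, rfl⟩
      simp
    · intro h
      exact ⟨⟨_, h⟩, by simp⟩
  have htop : ∀ i ∈ T, ∀ j ∉ T, hA.eigenvalues j ≤ hA.eigenvalues i := by
    intro i hi j hj
    rw [hmem] at hi hj
    rw [← σ.apply_symm_apply i, ← σ.apply_symm_apply j, hσ, hσ]
    exact eigDesc_antitone hA (Fin.le_def.2 (by omega))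
  have hT : T.Nonempty := (univ_nonempty_iff.2 ⟨⟨0, hK1⟩⟩).map
  have hcard : #T = K := by simp [T]
  have := sum_le_iff_exists_threshold T hT htop t
  rwa [hcard, sum_map] at this

/-- LMI representation of the sum of the `K` largest eigenvalues: for Hermitian `W`,
`λ₁(W) + … + λ_K(W) ≤ t` iff there exist Hermitian `Z` and `s ∈ ℝ` with
`t − Ks − tr Z ≥ 0`, `Z − W + sI ⪰ 0` and `Z ⪰ 0`. -/
theorem stmt_12 {N K : ℕ} (hK1 : 1 ≤ K) (hKN : K ≤ N)
    (W : Matrix (Fin N) (Fin N) ℂ) (hW : W.IsHermitian) (t : ℝ) :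
    (∑ i : Fin K, eigDesc hW ⟨(i : ℕ), lt_of_lt_of_le i.2 hKN⟩) ≤ t ↔
    ∃ (Z : Matrix (Fin N) (Fin N) ℂ) (s : ℝ), Z.IsHermitian ∧
      0 ≤ t - (K : ℝ) * s - (Matrix.trace Z).re ∧
      (Z - W + (s : ℂ) • 1).PosSemidef ∧ Z.PosSemidef := by
  refine (sum_eigDesc_le_iff hW hK1 hKN t).trans ⟨?_, ?_⟩
  · rintro ⟨s, hs⟩
    obtain ⟨Z, hZ, hZW, htr⟩ := (hW.exists_posSemidef_sub_add_smul_one_iff s _).2 hs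
    exact ⟨Z, s, hZ.isHermitian, sub_nonneg.2 htr, hZW, hZ⟩
  · rintro ⟨Z, s, -, htr, hZW, hZ⟩
    exact ⟨s, (hW.exists_posSemidef_sub_add_smul_one_iff s _).1 ⟨Z, hZ, hZW, sub_nonneg.1 htr⟩⟩
end

section
/- (Proposition 4.) Under the stated primal feasibility, dual feasibility, complementary slackness conditions, z₁ = tr(R̂ W) > 0, and the strict inequality x λ_{N−1}(C̄) + y₁ + y₂ < 0, the following hold: (1) x < 0; (2) z₁ = tr(C̄ Z)/Δ₀ and z₂ = 0; (3) y₁ + y₂ > 0. -/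
open Matrix
open scoped ComplexOrder

/-!
The strict inequality forces `z₂ = 0` through the slackness condition attached to it. If `x` were
`0`, the strict inequality would make `y₁ + y₂` negative, and then the normalisation
`Δ₀ x + (N - η₁) y₁ + (N + η₂) y₂ = 1` could not hold; so `x < 0`, and its slackness condition turns
the first dual constraint into the equality `tr(C̄ Z) = Δ₀ z₁`. Finally, expanding
`tr(Z (W - x C̄ - (y₁ + y₂) I)) = 0` gives `(y₁ + y₂) tr Z = tr(Z W) - x Δ₀ z₁ > 0`, because the trace
of a product of positive semidefinite matrices is nonnegative.
-/

theorem Matrix.PosSemidef.trace_mul_nonneg {n 𝕜 : Type*} [Fintype n] [DecidableEq n] [RCLike 𝕜]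
    {A B : Matrix n n 𝕜} (hA : A.PosSemidef) (hB : B.PosSemidef) : 0 ≤ (A * B).trace := by
  open scoped MatrixOrder in
  obtain ⟨R, rfl⟩ := CStarAlgebra.nonneg_iff_eq_star_mul_self.mp hB.nonneg
  rw [← mul_assoc, trace_mul_comm, ← mul_assoc]
  exact (hA.mul_mul_conjTranspose_same R).trace_nonneg

theorem Matrix.trace_mul_sub_smul_sub_smul_one {n R : Type*} [Fintype n] [DecidableEq n]
    [CommRing R] (Z W C : Matrix n n R) (a b : R) :
    trace (Z * (W - a • C - b • 1)) = trace (Z * W) - a * trace (C * Z) - b * trace Z := by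
  simp [mul_sub, trace_sub, trace_mul_comm Z C]

theorem sub_mul_add_add_mul_nonpos {N η₁ η₂ y₁ y₂ : ℝ} (hN : 0 ≤ N) (hη₁ : 0 ≤ η₁)
    (hη₂ : 0 ≤ η₂) (hy₁ : 0 ≤ y₁) (hy₂ : y₂ ≤ 0) (hy : y₁ + y₂ ≤ 0) :
    (N - η₁) * y₁ + (N + η₂) * y₂ ≤ 0 := by
  nlinarith [mul_nonneg hη₁ hy₁, mul_nonpos_of_nonneg_of_nonpos hη₂ hy₂]

/-- Proposition 4: under primal feasibility, dual feasibility, complementary slackness,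
`z₁ = tr(R̂W) > 0`, and `xλ_{N−1}(C̄) + y₁ + y₂ < 0`, one has (1) `x < 0`;
(2) `z₁ = tr(C̄Z)/Δ₀` and `z₂ = 0`; (3) `y₁ + y₂ > 0`. -/
theorem stmt_15 {N : ℕ} (hN : 2 ≤ N) (η₁ η₂ : ℝ) (hη₁0 : 0 ≤ η₁)
    (hη₂ : 0 ≤ η₂) (Δ₀ : ℝ) (hΔ₀ : 0 < Δ₀)
    (Cbar : Matrix (Fin N) (Fin N) ℂ) (hC : Cbar.PosSemidef)
    (W Z : Matrix (Fin N) (Fin N) ℂ) (x y₁ y₂ z₁ z₂ : ℝ)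
    -- primal feasibility
    (hW : W.PosSemidef) (hx : x ≤ 0) (hy₁ : 0 ≤ y₁) (hy₂ : y₂ ≤ 0)
    (hlin : Δ₀ * x + ((N : ℝ) - η₁) * y₁ + ((N : ℝ) + η₂) * y₂ = 1)
    -- dual feasibility
    (hZ : Z.PosSemidef)
    -- complementary slackness
    (hc2 : x * ((Matrix.trace (Cbar * Z)).re - Δ₀ * z₁ +
        eigDesc hC.isHermitian ⟨N - 2, by omega⟩ * z₂) = 0)
    (hc5 : z₂ * (x * eigDesc hC.isHermitian ⟨N - 2, by omega⟩ + y₁ + y₂) = 0)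
    (hc6 : Matrix.trace (Z * (W - (x : ℂ) • Cbar - ((y₁ + y₂ : ℝ) : ℂ) • 1)) = 0)
    -- zero duality gap and positive optimal value
    (hz₁pos : 0 < z₁)
    -- strict inequality
    (hstrict : x * eigDesc hC.isHermitian ⟨N - 2, by omega⟩ + y₁ + y₂ < 0) :
    x < 0 ∧ z₁ = (Matrix.trace (Cbar * Z)).re / Δ₀ ∧ z₂ = 0 ∧ 0 < y₁ + y₂ := by
  have hz₂ : z₂ = 0 := (mul_eq_zero.mp hc5).resolve_right hstrict.ne
  have hx_neg : x < 0 := by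
    refine hx.lt_of_ne fun hx0 => ?_
    subst hx0
    have hy : y₁ + y₂ ≤ 0 := by linarith
    linarith [sub_mul_add_add_mul_nonpos (Nat.cast_nonneg N) hη₁0 hη₂ hy₁ hy₂ hy]
  have htrCZ : (trace (Cbar * Z)).re = Δ₀ * z₁ := by
    have := (mul_eq_zero.mp hc2).resolve_left hx_neg.ne
    rw [hz₂] at this
    linarith
  refine ⟨hx_neg, by field_simp; linarith, hz₂, ?_⟩
  have hexpand : (trace (Z * W)).re - x * (Δ₀ * z₁) - (y₁ + y₂) * (trace Z).re = 0 := by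
    have := congrArg Complex.re hc6
    rw [trace_mul_sub_smul_sub_smul_one] at this
    simpa [htrCZ] using this
  have hZW : 0 ≤ (trace (Z * W)).re := (Complex.nonneg_iff.mp (hZ.trace_mul_nonneg hW)).1
  have hxz₁ : x * (Δ₀ * z₁) < 0 := mul_neg_of_neg_of_pos hx_neg (by positivity)
  exact pos_of_mul_pos_left (by linarith) (Complex.nonneg_iff.mp hZ.trace_nonneg).1
end

section
/- Let N ≥ 1, let C̄ be an N×N Hermitian positive semidefinite matrix, let Δ₀ ∈ ℝ and η₁, η₂ > 0, and suppose a₀ ∈ ℂ^N satisfies a₀^H C̄ a₀ < Δ₀ and ‖a₀‖² = N. Then there exists λ ∈ (0,1) such that for all μ with 0 < μ ≤ λ, the matrix X(μ) := μ I + (1−μ) a₀ a₀^H is Hermitian positive definite and satisfies tr(C̄ X(μ)) < Δ₀ and N − η₁ < tr X(μ) < N + η₂; i.e., the primal semidefinite relaxation with constraints tr(C̄ X) ≤ Δ₀, N − η₁ ≤ tr X ≤ N + η₂, X ⪰ 0 is strictly feasible. -/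
/-!
`X(μ)` is `μ I` plus a nonnegative multiple of the positive semidefinite `a₀ a₀ᴴ`, hence positive
definite for `0 < μ ≤ 1`. Since `‖a₀‖² = N`, its trace is `μ N + (1 - μ) N = N` for every `μ`, and
`tr(C̄ X(μ)) = μ tr C̄ + (1 - μ) a₀ᴴ C̄ a₀` is continuous in `μ` with value `a₀ᴴ C̄ a₀ < Δ₀` at
`μ = 0`, so it stays below `Δ₀` for all small `μ`.
-/

open Matrix
open scoped ComplexOrder

open Filter Topology

theorem exists_mem_Ioo_forall_of_eventually_nhds_zero {p : ℝ → Prop} (h : ∀ᶠ μ in 𝓝 0, p μ) :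
    ∃ l ∈ Set.Ioo (0 : ℝ) 1, ∀ μ, 0 < μ → μ ≤ l → p μ := by
  obtain ⟨ε, hε, hp⟩ := Metric.eventually_nhds_iff.mp h
  refine ⟨min (ε / 2) (1 / 2), ⟨by positivity, by linarith [min_le_right (ε / 2) (1 / 2)]⟩,
    fun μ hμ hμl => hp ?_⟩
  rw [Real.dist_0_eq_abs, abs_of_pos hμ]
  linarith [min_le_left (ε / 2) (1 / 2)]

section
variable {n R : Type*} [Fintype n] [DecidableEq n]

theorem Matrix.trace_smul_one_add_smul_vecMulVec [CommSemiring R] (c d : R) (a b : n → R) :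
    trace (c • (1 : Matrix n n R) + d • vecMulVec a b) = c * Fintype.card n + d * (a ⬝ᵥ b) := by
  simp [trace_add, trace_smul, trace_one, trace_vecMulVec]

theorem Matrix.trace_mul_smul_one_add_smul_vecMulVec [CommSemiring R] (C : Matrix n n R)
    (c d : R) (a b : n → R) :
    trace (C * (c • (1 : Matrix n n R) + d • vecMulVec a b)) = c * trace C + d * (b ⬝ᵥ C *ᵥ a) := by
  simp [mul_add, trace_add, trace_smul, mul_vecMulVec, trace_vecMulVec, dotProduct_comm]

theorem Matrix.posDef_ofReal_smul_one_add_smul_vecMulVec_self_star (a : n → ℂ) {c d : ℝ}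
    (hc : 0 < c) (hd : 0 ≤ d) :
    ((c : ℂ) • (1 : Matrix n n ℂ) + (d : ℂ) • vecMulVec a (star a)).PosDef :=
  (PosDef.one.smul (Complex.zero_lt_real.mpr hc)).add_posSemidef
    ((posSemidef_vecMulVec_self_star a).smul (Complex.zero_le_real.mpr hd))

end

theorem ofReal_nsq {N : ℕ} (a : Fin N → ℂ) : (nsq a : ℂ) = a ⬝ᵥ star a := by
  simp [nsq, dotProduct, Complex.mul_conj]

theorem stmt_19_general {N : ℕ} (Cbar : Matrix (Fin N) (Fin N) ℂ)
    (Δ₀ η₁ η₂ : ℝ) (hη₁ : 0 < η₁) (hη₂ : 0 < η₂)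
    (a₀ : Fin N → ℂ) (ha₀C : (star a₀ ⬝ᵥ Cbar.mulVec a₀).re < Δ₀) (ha₀ : nsq a₀ = N) :
    ∃ l : ℝ, l ∈ Set.Ioo (0 : ℝ) 1 ∧ ∀ μ : ℝ, 0 < μ → μ ≤ l →
      ((μ : ℂ) • (1 : Matrix (Fin N) (Fin N) ℂ) +
        ((1 - μ : ℝ) : ℂ) • Matrix.vecMulVec a₀ (star a₀)).PosDef ∧
      (Matrix.trace (Cbar * ((μ : ℂ) • (1 : Matrix (Fin N) (Fin N) ℂ) +
        ((1 - μ : ℝ) : ℂ) • Matrix.vecMulVec a₀ (star a₀)))).re < Δ₀ ∧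
      (N : ℝ) - η₁ < (Matrix.trace ((μ : ℂ) • (1 : Matrix (Fin N) (Fin N) ℂ) +
        ((1 - μ : ℝ) : ℂ) • Matrix.vecMulVec a₀ (star a₀))).re ∧
      (Matrix.trace ((μ : ℂ) • (1 : Matrix (Fin N) (Fin N) ℂ) +
        ((1 - μ : ℝ) : ℂ) • Matrix.vecMulVec a₀ (star a₀))).re < (N : ℝ) + η₂ := by
  set t := (trace Cbar).re
  set v := (star a₀ ⬝ᵥ Cbar *ᵥ a₀).re
  have hcont : Continuous fun μ : ℝ => μ * t + (1 - μ) * v := by fun_prop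
  have hsmall : ∀ᶠ μ in 𝓝 0, μ * t + (1 - μ) * v < Δ₀ :=
    hcont.continuousAt.eventually_lt continuousAt_const (by simpa using ha₀C)
  obtain ⟨l, ⟨hl0, hl1⟩, hl⟩ := exists_mem_Ioo_forall_of_eventually_nhds_zero hsmall
  refine ⟨l, ⟨hl0, hl1⟩, fun μ hμ hμl => ?_⟩
  have htr : (trace ((μ : ℂ) • (1 : Matrix (Fin N) (Fin N) ℂ) +
      ((1 - μ : ℝ) : ℂ) • vecMulVec a₀ (star a₀))).re = N := by
    rw [trace_smul_one_add_smul_vecMulVec, ← ofReal_nsq, ha₀, Fintype.card_fin]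
    push_cast
    ring_nf
    exact Complex.natCast_re N
  refine ⟨posDef_ofReal_smul_one_add_smul_vecMulVec_self_star a₀ hμ (by linarith), ?_,
    by linarith, by linarith⟩
  rw [trace_mul_smul_one_add_smul_vecMulVec]
  simpa [Complex.re_ofReal_mul] using hl μ hμ hμl

/-- Strict feasibility of the primal SDP relaxation over the uncertainty set `𝒜₂`: if
`a₀ᴴC̄a₀ < Δ₀` and `‖a₀‖² = N`, there is `λ ∈ (0,1)` such that for all `0 < μ ≤ λ` the
matrix `X(μ) = μI + (1−μ)a₀a₀ᴴ` is positive definite with `tr(C̄X(μ)) < Δ₀` and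
`N − η₁ < tr X(μ) < N + η₂`. -/
theorem stmt_19 {N : ℕ} (hN : 1 ≤ N) (Cbar : Matrix (Fin N) (Fin N) ℂ)
    (hC : Cbar.PosSemidef) (Δ₀ η₁ η₂ : ℝ) (hη₁ : 0 < η₁) (hη₂ : 0 < η₂)
    (a₀ : Fin N → ℂ) (ha₀C : (star a₀ ⬝ᵥ Cbar.mulVec a₀).re < Δ₀) (ha₀ : nsq a₀ = N) :
    ∃ l : ℝ, l ∈ Set.Ioo (0 : ℝ) 1 ∧ ∀ μ : ℝ, 0 < μ → μ ≤ l →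
      ((μ : ℂ) • (1 : Matrix (Fin N) (Fin N) ℂ) +
        ((1 - μ : ℝ) : ℂ) • Matrix.vecMulVec a₀ (star a₀)).PosDef ∧
      (Matrix.trace (Cbar * ((μ : ℂ) • (1 : Matrix (Fin N) (Fin N) ℂ) +
        ((1 - μ : ℝ) : ℂ) • Matrix.vecMulVec a₀ (star a₀)))).re < Δ₀ ∧
      (N : ℝ) - η₁ < (Matrix.trace ((μ : ℂ) • (1 : Matrix (Fin N) (Fin N) ℂ) +
        ((1 - μ : ℝ) : ℂ) • Matrix.vecMulVec a₀ (star a₀))).re ∧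
      (Matrix.trace ((μ : ℂ) • (1 : Matrix (Fin N) (Fin N) ℂ) +
        ((1 - μ : ℝ) : ℂ) • Matrix.vecMulVec a₀ (star a₀))).re < (N : ℝ) + η₂ :=
  stmt_19_general Cbar Δ₀ η₁ η₂ hη₁ hη₂ a₀ ha₀C ha₀
end
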